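/- arXiv:2209.06765 — 7 statements merged into one kernel-verified Lean document; each statement's English description precedes it below -/
import Mathlib

section
/- Let f : ℤ² → ℝ_{≥0} be finitely supported and let f* denote its rearrangement with respect to the spiral enumeration of ℤ². Then ‖∇f*‖_{L^∞} ≤ 2·‖∇f‖_{L^∞}, where the norms are taken with respect to the grid graph (ℤ²,ℓ¹). -/
open Real

/-- The edge boundary of a set `A`: the edges of `G` with exactly one endpoint in `A`. -/
def edgeBoundary {V : Type*} (G : SimpleGraph V) (A : Set V) : Set (Sym2 V) :=
  {e | e ∈ G.edgeSet ∧ ∃ u w : V, e = s(u, w) ∧ u ∈ A ∧ w ∉ A}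

/-- The vertex boundary of `A`: vertices outside `A` adjacent to some vertex of `A`. -/
def vertexBoundary {V : Type*} (G : SimpleGraph V) (A : Set V) : Set V :=
  {u | u ∉ A ∧ ∃ w ∈ A, G.Adj u w}

/-- The vertex-isoperimetric profile `∂_V(N)`. -/
noncomputable def vertexProfile {V : Type*} (G : SimpleGraph V) (N : ℕ) : ℕ :=
  sInf {k : ℕ | ∃ A : Set V, A.Finite ∧ A.ncard = N ∧ (vertexBoundary G A).ncard = k}

/-- `‖∇f‖_{L¹} = ∑_{{u,w} ∈ E} |f u - f w|`. -/
noncomputable def gradL1 {V : Type*} (G : SimpleGraph V) (f : V → ℝ) : ℝ :=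
  ∑' e : G.edgeSet,
    Sym2.lift ⟨fun u w => |f u - f w|, fun u w => by dsimp only; rw [abs_sub_comm]⟩ e.1

/-- `‖∇f‖_{L^∞} = sup_{{u,w} ∈ E} |f u - f w|`. -/
noncomputable def gradLinf {V : Type*} (G : SimpleGraph V) (f : V → ℝ) : ℝ :=
  ⨆ e : G.edgeSet,
    Sym2.lift ⟨fun u w => |f u - f w|, fun u w => by dsimp only; rw [abs_sub_comm]⟩ e.1

/-- `‖∇f‖_{L^p} = (∑_{{u,w} ∈ E} |f u - f w|^p)^(1/p)` for real `p`. -/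
noncomputable def gradLp {V : Type*} (G : SimpleGraph V) (f : V → ℝ) (p : ℝ) : ℝ :=
  (∑' e : G.edgeSet,
    Sym2.lift ⟨fun u w => |f u - f w| ^ p,
      fun u w => by dsimp only; rw [abs_sub_comm]⟩ e.1) ^ (1 / p)

/-- `‖∇f‖_{L²} = (∑_{{u,w} ∈ E} |f u - f w|²)^(1/2)`. -/
noncomputable def gradL2 {V : Type*} (G : SimpleGraph V) (f : V → ℝ) : ℝ :=
  Real.sqrt (∑' e : G.edgeSet,
    Sym2.lift ⟨fun u w => |f u - f w| ^ 2,
      fun u w => by dsimp only; rw [abs_sub_comm]⟩ e.1)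

/-- `g` is the rearrangement of `f` along the enumeration `v` (with `v 0 = v₁`):
`g` is obtained from `f` by permuting its values, and the values of `g` are
non-increasing along the enumeration. -/
def IsRearrangement {V : Type*} (v : ℕ → V) (f g : V → ℝ) : Prop :=
  (∃ σ : Equiv.Perm V, g = f ∘ σ) ∧ ∀ m n : ℕ, m ≤ n → g (v n) ≤ g (v m)

/-- The grid graph `(ℤ², ℓ¹)`. -/
def gridGraph : SimpleGraph (ℤ × ℤ) where
  Adj p q := |p.1 - q.1| + |p.2 - q.2| = 1
  symm := by
    constructor
    intro p q h
    rw [abs_sub_comm q.1 p.1, abs_sub_comm q.2 p.2]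
    exact h
  loopless := by constructor; intro p h; simp at h

/-- One step of the counterclockwise square spiral on `ℤ²`. -/
def spiralNext : ℤ × ℤ → ℤ × ℤ := fun p =>
  if 1 ≤ p.1 ∧ p.2 = -p.1 then (p.1 + 1, p.2)
  else if 1 ≤ p.1 ∧ -p.1 ≤ p.2 ∧ p.2 < p.1 then (p.1, p.2 + 1)
  else if 1 ≤ p.2 ∧ -p.2 < p.1 ∧ p.1 ≤ p.2 then (p.1 - 1, p.2)
  else if p.1 ≤ -1 ∧ p.1 < p.2 ∧ p.2 ≤ -p.1 then (p.1, p.2 - 1)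
  else (p.1 + 1, p.2)

/-- The spiral enumeration of `ℤ²`, 0-indexed: `spiral 0 = v₁ = (0,0)`,
`spiral 1 = v₂ = (1,0)`, `spiral 2 = v₃ = (1,1)`, `spiral 3 = v₄ = (0,1)`, … -/
def spiral (n : ℕ) : ℤ × ℤ := spiralNext^[n] (0, 0)

/-!
Let `ε = ‖∇f‖_{L^∞}`. Along an edge `f` changes by at most `ε`, so the superlevel set
`{f ≥ t - ε}` contains `{f ≥ t}` together with all its grid neighbours. A set `A ⊆ ℤ²` with
`|A| > k²` meets more than `k` columns or more than `k` rows, each of which gains a point at both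
ends, so `|A ∪ ∂A| ≥ |A| + 2k + 4`. If `f*(spiral m) = t`, then `|{f ≥ t}| > m`, and two such
steps give `|{f ≥ t - 2ε}| > m + 4⌊√m⌋ + 10`. On the other hand the spiral keeps neighbours
close: if `spiral m` and `spiral n` are adjacent and `m < n`, then `n ≤ m + 4⌊√m⌋ + 10`.
Hence `f*(spiral n) ≥ t - 2ε`.
-/

lemma gridGraph_adj_iff {p q : ℤ × ℤ} : gridGraph.Adj p q ↔
    q = (p.1 + 1, p.2) ∨ q = (p.1 - 1, p.2) ∨ q = (p.1, p.2 + 1) ∨ q = (p.1, p.2 - 1) := by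
  obtain ⟨a, b⟩ := p
  obtain ⟨c, d⟩ := q
  simp only [gridGraph, Prod.mk.injEq]
  rcases abs_cases (a - c) with ⟨h, _⟩ | ⟨h, _⟩ <;>
    rcases abs_cases (b - d) with ⟨h', _⟩ | ⟨h', _⟩ <;> rw [h, h'] <;> omega

lemma gridGraph_adj_swap {p q : ℤ × ℤ} : gridGraph.Adj p.swap q.swap ↔ gridGraph.Adj p q := by
  simp only [gridGraph, Prod.fst_swap, Prod.snd_swap, add_comm]

section Isoperimetry

open Finset

theorem card_add_two_le_of_add_one_sub_one_mem {S T : Finset ℤ} (hS : S.Nonempty) (hST : S ⊆ T)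
    (hsucc : ∀ a ∈ S, a + 1 ∈ T) (hpred : ∀ a ∈ S, a - 1 ∈ T) : #S + 2 ≤ #T := by
  have hle := S.min'_le_max' hS
  have hsub : insert (S.max' hS + 1) (insert (S.min' hS - 1) S) ⊆ T := by
    simp only [insert_subset_iff]
    exact ⟨hsucc _ (S.max'_mem hS), hpred _ (S.min'_mem hS), hST⟩
  have hmin : S.min' hS - 1 ∉ S := fun h => by linarith [S.min'_le _ h]
  have hmax : S.max' hS + 1 ∉ insert (S.min' hS - 1) S := by
    rw [mem_insert, not_or]
    exact ⟨by omega, fun h => by linarith [S.le_max' _ h]⟩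
  have := card_le_card hsub
  rw [card_insert_of_notMem hmax, card_insert_of_notMem hmin] at this
  omega

theorem card_add_two_mul_card_image_fst_add_two_le {A B : Finset (ℤ × ℤ)} (hA : A.Nonempty)
    (hAB : A ⊆ B) (hnb : ∀ p ∈ A, ∀ q, gridGraph.Adj p q → q ∈ B) :
    #A + 2 * #(A.image Prod.fst) + 2 ≤ #B := by
  -- each column of `A` gains a point above and below it, and `B` has two more columns than `A`
  set C := A.image Prod.fst
  set D := B.image Prod.fst
  have hCD : C ⊆ D := image_subset_image hAB
  have hcols : #C + 2 ≤ #D := by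
    refine card_add_two_le_of_add_one_sub_one_mem (hA.image _) hCD ?_ ?_ <;>
      simp only [C, D, forall_mem_image] <;> intro p hp
    · exact mem_image_of_mem _ (hnb p hp (p.1 + 1, p.2) (gridGraph_adj_iff.2 (by simp)))
    · exact mem_image_of_mem _ (hnb p hp (p.1 - 1, p.2) (gridGraph_adj_iff.2 (by simp)))
  have hcol : ∀ x ∈ C, #{p ∈ A | p.1 = x} + 2 ≤ #{p ∈ B | p.1 = x} := by
    intro x hx
    have hinj (X : Finset (ℤ × ℤ)) : Set.InjOn Prod.snd (X.filter (·.1 = x) : Set (ℤ × ℤ)) :=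
      fun p hp q hq h => Prod.ext ((mem_filter.1 hp).2.trans (mem_filter.1 hq).2.symm) h
    rw [← card_image_of_injOn (hinj A), ← card_image_of_injOn (hinj B)]
    refine card_add_two_le_of_add_one_sub_one_mem ?_
      (image_subset_image (filter_subset_filter _ hAB)) ?_ ?_
    · obtain ⟨p, hp, rfl⟩ := mem_image.1 hx
      exact ⟨p.2, mem_image.2 ⟨p, mem_filter.2 ⟨hp, rfl⟩, rfl⟩⟩
    all_goals simp only [forall_mem_image, mem_filter, and_imp]; rintro p hp rfl
    · exact mem_image.2
        ⟨(p.1, p.2 + 1), mem_filter.2 ⟨hnb p hp _ (gridGraph_adj_iff.2 (by simp)), rfl⟩, rfl⟩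
    · exact mem_image.2
        ⟨(p.1, p.2 - 1), mem_filter.2 ⟨hnb p hp _ (gridGraph_adj_iff.2 (by simp)), rfl⟩, rfl⟩
  have hfiber : ∀ x ∈ D \ C, 1 ≤ #{p ∈ B | p.1 = x} := by
    intro x hx
    obtain ⟨p, hp, rfl⟩ := mem_image.1 (mem_sdiff.1 hx).1
    exact card_pos.2 ⟨p, mem_filter.2 ⟨hp, rfl⟩⟩
  calc #A + 2 * #C + 2 ≤ ∑ x ∈ C, (#{p ∈ A | p.1 = x} + 2) + #(D \ C) := by
        rw [sum_add_distrib, ← card_eq_sum_card_image, sum_const, smul_eq_mul,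
          card_sdiff_of_subset hCD]
        omega
    _ ≤ ∑ x ∈ C, #{p ∈ B | p.1 = x} + ∑ x ∈ D \ C, #{p ∈ B | p.1 = x} := by
        gcongr with x hx
        · exact hcol x hx
        · simpa using card_nsmul_le_sum _ _ 1 hfiber
    _ = #B := by rw [add_comm, sum_sdiff hCD, ← card_eq_sum_card_image]

theorem card_add_two_mul_card_image_snd_add_two_le {A B : Finset (ℤ × ℤ)} (hA : A.Nonempty)
    (hAB : A ⊆ B) (hnb : ∀ p ∈ A, ∀ q, gridGraph.Adj p q → q ∈ B) :
    #A + 2 * #(A.image Prod.snd) + 2 ≤ #B := by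
  let e := (Equiv.prodComm ℤ ℤ).toEmbedding
  have h := card_add_two_mul_card_image_fst_add_two_le (A := A.map e) (B := B.map e) (hA.map)
    (map_subset_map.2 hAB) fun p hp q hpq => by
      rw [mem_map_equiv] at hp ⊢
      exact hnb _ hp _ (gridGraph_adj_swap.2 hpq)
  have hfst : Prod.fst ∘ Prod.swap = (Prod.snd : ℤ × ℤ → ℤ) := rfl
  simpa [e, map_eq_image, image_image, hfst, card_image_of_injective _ Prod.swap_injective] using h

theorem gridGraph_card_add_two_mul_add_four_le {A B : Finset (ℤ × ℤ)} (hAB : A ⊆ B)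
    (hnb : ∀ p ∈ A, ∀ q, gridGraph.Adj p q → q ∈ B) {k : ℕ} (hk : k ^ 2 < #A) :
    #A + 2 * k + 4 ≤ #B := by
  have hA : A.Nonempty := card_pos.1 (by omega)
  have hprod : #A ≤ #(A.image Prod.fst) * #(A.image Prod.snd) :=
    card_product _ _ ▸ card_le_card subset_product
  by_cases hc : k < #(A.image Prod.fst)
  · have := card_add_two_mul_card_image_fst_add_two_le hA hAB hnb
    omega
  · have hr : k < #(A.image Prod.snd) := by
      by_contra hr
      have := Nat.mul_le_mul (not_lt.1 hc) (not_lt.1 hr)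
      nlinarith
    have := card_add_two_mul_card_image_snd_add_two_le hA hAB hnb
    omega

theorem gridGraph_ncard_add_two_mul_add_four_le {A B : Set (ℤ × ℤ)} (hB : B.Finite) (hAB : A ⊆ B)
    (hnb : ∀ p ∈ A, ∀ q, gridGraph.Adj p q → q ∈ B) {k : ℕ} (hk : k ^ 2 < A.ncard) :
    A.ncard + 2 * k + 4 ≤ B.ncard := by
  lift B to Finset (ℤ × ℤ) using hB
  lift A to Finset (ℤ × ℤ) using B.finite_toSet.subset hAB
  simp only [Set.ncard_coe_finset, Finset.coe_subset, Finset.mem_coe] at *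
  exact gridGraph_card_add_two_mul_add_four_le hAB hnb hk

end Isoperimetry

section GradLinf

variable {V : Type*} {G : SimpleGraph V} {f : V → ℝ}

theorem gradLinf_nonneg : 0 ≤ gradLinf G f :=
  Real.iSup_nonneg fun ⟨e, _⟩ => by induction e using Sym2.ind with | _ u w => exact abs_nonneg _

theorem abs_sub_le_gradLinf (hf : BddAbove (Set.range fun x => |f x|)) {u w : V} (h : G.Adj u w) :
    |f u - f w| ≤ gradLinf G f := by
  obtain ⟨M, hM⟩ := hf
  refine le_ciSup (f := fun e : G.edgeSet => Sym2.lift ⟨fun u w => |f u - f w|, _⟩ e.1)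
    ⟨2 * M, ?_⟩ ⟨s(u, w), h⟩
  rintro _ ⟨⟨e, _⟩, rfl⟩
  induction e using Sym2.ind with
  | _ u w =>
    have := abs_sub (f u) (f w)
    have := hM ⟨u, rfl⟩
    have := hM ⟨w, rfl⟩
    simp only [Sym2.lift_mk]
    linarith

theorem gradLinf_le {c : ℝ} (hc : 0 ≤ c) (h : ∀ u w, G.Adj u w → |f u - f w| ≤ c) :
    gradLinf G f ≤ c :=
  Real.iSup_le (fun ⟨e, he⟩ => by induction e using Sym2.ind with | _ u w => exact h u w he) hc

end GradLinf

namespace IsRearrangement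

variable {V : Type*} {v : ℕ → V} {f g : V → ℝ}

theorem ncard_superlevel (hre : IsRearrangement v f g) (t : ℝ) :
    {x | t ≤ g x}.ncard = {x | t ≤ f x}.ncard := by
  obtain ⟨⟨σ, rfl⟩, -⟩ := hre
  exact Set.ncard_preimage_of_injective_subset_range (s := {x | t ≤ f x}) σ.injective (by simp)

theorem lt_ncard_superlevel (hre : IsRearrangement v f g) (hv : v.Injective) (k : ℕ)
    (hfin : {x | g (v k) ≤ f x}.Finite) : k < {x | g (v k) ≤ f x}.ncard := by
  rw [← hre.ncard_superlevel]
  have hfin' : {x | g (v k) ≤ g x}.Finite := by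
    obtain ⟨⟨σ, rfl⟩, -⟩ := hre
    exact hfin.preimage (f := σ) σ.injective.injOn
  calc k < (v '' Set.Iic k).ncard := by simp [Set.ncard_image_of_injective _ hv]
    _ ≤ _ := Set.ncard_le_ncard (by rintro _ ⟨j, hj, rfl⟩; exact hre.2 j k hj) hfin'

theorem le_apply_of_lt_ncard (hre : IsRearrangement v f g) (hv : v.Surjective) {k : ℕ} {t : ℝ}
    (h : k < {x | t ≤ f x}.ncard) : t ≤ g (v k) := by
  by_contra! hlt
  have hsub : {x | t ≤ g x} ⊆ v '' Set.Iio k := by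
    intro x hx
    obtain ⟨j, rfl⟩ := hv x
    refine ⟨j, Set.mem_Iio.2 (not_le.1 fun hkj => ?_), rfl⟩
    linarith [hre.2 k j hkj, hx.out]
  have := (Set.ncard_le_ncard hsub ((Set.finite_Iio k).image v)).trans
    (Set.ncard_image_le (Set.finite_Iio k))
  rw [hre.ncard_superlevel, Set.ncard_Iio_nat] at this
  omega

end IsRearrangement

/-- The inverse of `spiral`: the ring `max |x| |y| = r ≥ 1` carries the indices
`(2r-1)², …, (2r+1)² - 1`, starting at `(r, 1-r)`; the branches are its right, top, left and
bottom sides. -/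
def spiralIndex (p : ℤ × ℤ) : ℤ :=
  if 1 ≤ p.1 ∧ -p.1 < p.2 ∧ p.2 ≤ p.1 then (2 * p.1 - 1) ^ 2 + p.1 + p.2 - 1
  else if 1 ≤ p.2 ∧ -p.2 ≤ p.1 ∧ p.1 < p.2 then (2 * p.2 - 1) ^ 2 + 3 * p.2 - 1 - p.1
  else if p.1 ≤ -1 ∧ p.1 ≤ p.2 ∧ p.2 < -p.1 then (2 * p.1 + 1) ^ 2 - 5 * p.1 - 1 - p.2
  else if p.2 ≤ -1 ∧ p.2 < p.1 ∧ p.1 ≤ -p.2 then (2 * p.2 + 1) ^ 2 + p.1 - 7 * p.2 - 1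
  else 0

def spiralPrev (p : ℤ × ℤ) : ℤ × ℤ :=
  if 1 ≤ p.1 ∧ p.2 = 1 - p.1 then (p.1 - 1, p.2)
  else if 1 ≤ p.1 ∧ 1 - p.1 < p.2 ∧ p.2 ≤ p.1 then (p.1, p.2 - 1)
  else if 1 ≤ p.2 ∧ -p.2 ≤ p.1 ∧ p.1 < p.2 then (p.1 + 1, p.2)
  else if p.1 ≤ -1 ∧ p.1 ≤ p.2 ∧ p.2 < -p.1 then (p.1, p.2 + 1)
  else (p.1 - 1, p.2)

theorem spiralIndex_cases (x y : ℤ) :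
    x = 0 ∧ y = 0 ∧ spiralIndex (x, y) = 0 ∨
    1 ≤ x ∧ -x < y ∧ y ≤ x ∧ spiralIndex (x, y) = (2 * x - 1) ^ 2 + x + y - 1 ∨
    1 ≤ y ∧ -y ≤ x ∧ x < y ∧ spiralIndex (x, y) = (2 * y - 1) ^ 2 + 3 * y - 1 - x ∨
    x ≤ -1 ∧ x ≤ y ∧ y < -x ∧ spiralIndex (x, y) = (2 * x + 1) ^ 2 - 5 * x - 1 - y ∨
    y ≤ -1 ∧ y < x ∧ x ≤ -y ∧ spiralIndex (x, y) = (2 * y + 1) ^ 2 + x - 7 * y - 1 := by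
  simp only [spiralIndex]
  split_ifs with h₁ h₂ h₃ h₄
  · exact Or.inr <| Or.inl ⟨h₁.1, h₁.2.1, h₁.2.2, rfl⟩
  · exact Or.inr <| Or.inr <| Or.inl ⟨h₂.1, h₂.2.1, h₂.2.2, rfl⟩
  · exact Or.inr <| Or.inr <| Or.inr <| Or.inl ⟨h₃.1, h₃.2.1, h₃.2.2, rfl⟩
  · exact Or.inr <| Or.inr <| Or.inr <| Or.inr ⟨h₄.1, h₄.2.1, h₄.2.2, rfl⟩
  · exact Or.inl ⟨by omega, by omega, rfl⟩

theorem spiralIndex_pos {p : ℤ × ℤ} (hp : p ≠ 0) : 0 < spiralIndex p := by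
  obtain ⟨x, y⟩ := p
  rw [ne_eq, Prod.mk_eq_zero, not_and_or] at hp
  rcases spiralIndex_cases x y with h | h | h | h | h <;> first | omega | nlinarith

theorem spiralIndex_spiralNext (p : ℤ × ℤ) : spiralIndex (spiralNext p) = spiralIndex p + 1 := by
  obtain ⟨x, y⟩ := p
  have hq := spiralIndex_cases (spiralNext (x, y)).1 (spiralNext (x, y)).2
  simp only [spiralNext] at hq ⊢
  split_ifs at hq ⊢ <;> rcases spiralIndex_cases x y with h | h | h | h | h <;>
    rcases hq with h' | h' | h' | h' | h' <;> first | omega | nlinarith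

theorem spiralNext_spiralPrev {p : ℤ × ℤ} (hp : p ≠ 0) : spiralNext (spiralPrev p) = p := by
  obtain ⟨x, y⟩ := p
  rw [ne_eq, Prod.mk_eq_zero, not_and_or] at hp
  simp only [spiralPrev]
  split_ifs <;> simp only [spiralNext] <;> split_ifs <;>
    simp only [Prod.mk.injEq, and_true, true_and] <;> omega

theorem spiralIndex_spiral (n : ℕ) : spiralIndex (spiral n) = n := by
  induction n with
  | zero => rfl
  | succ n ih =>
    rw [spiral, Function.iterate_succ_apply', ← spiral, spiralIndex_spiralNext, ih]
    push_cast
    rfl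

theorem spiral_of_spiralIndex_eq {p : ℤ × ℤ} {n : ℕ} (h : spiralIndex p = n) : spiral n = p := by
  induction n generalizing p with
  | zero =>
    by_contra hp
    exact (spiralIndex_pos (Ne.symm hp)).ne' h
  | succ n ih =>
    have hp : p ≠ 0 := by
      rintro rfl
      rw [show spiralIndex 0 = 0 from rfl] at h
      omega
    have hprev : spiralIndex (spiralPrev p) = n := by
      have := spiralIndex_spiralNext (spiralPrev p)
      rw [spiralNext_spiralPrev hp] at this
      omega
    rw [spiral, Function.iterate_succ_apply', ← spiral, ih hprev, spiralNext_spiralPrev hp]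

theorem spiral_injective : spiral.Injective := fun m n h => by
  have := congrArg spiralIndex h
  rwa [spiralIndex_spiral, spiralIndex_spiral, Nat.cast_inj] at this

theorem spiral_surjective : spiral.Surjective := by
  intro p
  obtain ⟨n, hn⟩ : ∃ n : ℕ, spiralIndex p = n := by
    rcases eq_or_ne p 0 with rfl | hp
    · exact ⟨0, rfl⟩
    · exact Int.eq_ofNat_of_zero_le (spiralIndex_pos hp).le
  exact ⟨n, spiral_of_spiralIndex_eq hn⟩

theorem exists_spiralIndex_le_add_four_mul_of_adj {p q : ℤ × ℤ} (hadj : gridGraph.Adj p q)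
    (hlt : spiralIndex p < spiralIndex q) :
    ∃ s : ℤ, 0 ≤ s ∧ s ^ 2 ≤ spiralIndex p ∧ spiralIndex q ≤ spiralIndex p + 4 * s + 10 := by
  -- On ring `r` the index is at least `(2r-1)²` on the right and top sides and at least `4r²+1`
  -- on the left and bottom sides; from there a step to a neighbour raises it by at most
  -- `8r+5`, resp. `8r+7`.
  obtain ⟨x, y⟩ := p
  obtain ⟨a, b⟩ := q
  have hq := spiralIndex_cases a b
  rw [gridGraph_adj_iff] at hadj
  rcases spiralIndex_cases x y with ⟨rfl, rfl, hp⟩ | ⟨h₁, h₂, h₃, hp⟩ | ⟨h₁, h₂, h₃, hp⟩ |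
      ⟨h₁, h₂, h₃, hp⟩ | ⟨h₁, h₂, h₃, hp⟩ <;>
    [refine ⟨0, le_rfl, by omega, ?_⟩; refine ⟨2 * x - 1, by omega, by nlinarith, ?_⟩;
      refine ⟨2 * y - 1, by omega, by nlinarith, ?_⟩; refine ⟨-2 * x, by omega, by nlinarith, ?_⟩;
      refine ⟨-2 * y, by omega, by nlinarith, ?_⟩] <;>
    rcases hadj with h | h | h | h <;> simp only [Prod.mk.injEq] at h <;> obtain ⟨rfl, rfl⟩ := h <;>
    rcases hq with hq | hq | hq | hq | hq <;> first | omega | nlinarith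

theorem le_add_four_mul_sqrt_of_adj_spiral {m n : ℕ} (hadj : gridGraph.Adj (spiral m) (spiral n))
    (hmn : m < n) : n ≤ m + 4 * m.sqrt + 10 := by
  obtain ⟨s, hs₀, hs, hgap⟩ :=
    exists_spiralIndex_le_add_four_mul_of_adj hadj (by simpa [spiralIndex_spiral] using hmn)
  simp only [spiralIndex_spiral] at hs hgap
  lift s to ℕ using hs₀
  have : s ≤ m.sqrt := Nat.le_sqrt'.2 (by exact_mod_cast hs)
  omega

theorem IsRearrangement.spiral_sub_le_of_adj {f g : ℤ × ℤ → ℝ} {ε : ℝ}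
    (hre : IsRearrangement spiral f g) (hsupp : (Function.support f).Finite) (hpos : ∀ x, 0 ≤ f x)
    (hε₀ : 0 ≤ ε) (hε : ∀ u w, gridGraph.Adj u w → |f u - f w| ≤ ε) {m n : ℕ} (hmn : m < n)
    (hadj : gridGraph.Adj (spiral m) (spiral n)) : g (spiral m) - g (spiral n) ≤ 2 * ε := by
  by_contra! hlt
  set a := g (spiral m)
  have hgn : 0 ≤ g (spiral n) := by
    obtain ⟨⟨σ, hσ⟩, -⟩ := hre
    exact hσ ▸ hpos _
  let L (t : ℝ) : Set (ℤ × ℤ) := {x | t ≤ f x}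
  have hfin (t : ℝ) (ht : 0 < t) : (L t).Finite :=
    hsupp.subset fun x hx => (ht.trans_le hx).ne'
  have hsub (t : ℝ) : L t ⊆ L (t - ε) := fun x (hx : t ≤ f x) => by
    change t - ε ≤ f x
    linarith
  have hnb (t : ℝ) : ∀ p ∈ L t, ∀ q, gridGraph.Adj p q → q ∈ L (t - ε) := fun p hp q hpq => by
    change t - ε ≤ f q
    linarith [hp.out, (abs_sub_le_iff.1 (hε p q hpq)).1]
  have hA : m < (L a).ncard := hre.lt_ncard_superlevel spiral_injective m (hfin a (by linarith))
  have hsqrt := Nat.sqrt_le' m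
  have hB := gridGraph_ncard_add_two_mul_add_four_le (hfin (a - ε) (by linarith)) (hsub a) (hnb a)
    (k := m.sqrt) (by omega)
  have hD := gridGraph_ncard_add_two_mul_add_four_le (hfin (a - ε - ε) (by linarith))
    (hsub (a - ε)) (hnb (a - ε)) (k := m.sqrt + 1) (by nlinarith)
  have hgap := le_add_four_mul_sqrt_of_adj_spiral hadj hmn
  have := hre.le_apply_of_lt_ncard spiral_surjective (show n < (L (a - ε - ε)).ncard by omega)
  linarith

theorem IsRearrangement.spiral_abs_sub_le_of_adj {f g : ℤ × ℤ → ℝ} {ε : ℝ}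
    (hre : IsRearrangement spiral f g) (hsupp : (Function.support f).Finite) (hpos : ∀ x, 0 ≤ f x)
    (hε₀ : 0 ≤ ε) (hε : ∀ u w, gridGraph.Adj u w → |f u - f w| ≤ ε) {u w : ℤ × ℤ}
    (hadj : gridGraph.Adj u w) : |g u - g w| ≤ 2 * ε := by
  obtain ⟨m, rfl⟩ := spiral_surjective u
  obtain ⟨n, rfl⟩ := spiral_surjective w
  rcases lt_trichotomy m n with hmn | rfl | hmn
  · have := hre.2 m n hmn.le
    rw [abs_sub_le_iff]
    exact ⟨hre.spiral_sub_le_of_adj hsupp hpos hε₀ hε hmn hadj, by linarith⟩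
  · exact absurd rfl hadj.ne
  · have := hre.2 n m hmn.le
    rw [abs_sub_le_iff]
    exact ⟨by linarith, hre.spiral_sub_le_of_adj hsupp hpos hε₀ hε hmn hadj.symm⟩

/-- For a finitely supported `f : ℤ² → ℝ_{≥0}`, the spiral
rearrangement `f*` satisfies `‖∇f*‖_{L^∞} ≤ 2‖∇f‖_{L^∞}` on the grid graph `(ℤ², ℓ¹)`. -/
theorem spiral_polya_szego_Linf (f fstar : ℤ × ℤ → ℝ)
    (hsupp : (Function.support f).Finite) (hpos : ∀ x, 0 ≤ f x)
    (hre : IsRearrangement spiral f fstar) :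
    gradLinf gridGraph fstar ≤ 2 * gradLinf gridGraph f := by
  have hbdd : BddAbove (Set.range fun x => |f x|) :=
    ((hsupp.image fun x => |f x|).insert 0).bddAbove.mono <| by
      rintro _ ⟨x, rfl⟩
      by_cases hx : f x = 0
      · simp [hx]
      · exact Or.inr ⟨x, hx, rfl⟩
  exact gradLinf_le (mul_nonneg zero_le_two gradLinf_nonneg) fun u w huw =>
    hre.spiral_abs_sub_le_of_adj hsupp hpos gradLinf_nonneg
      (fun _ _ h => abs_sub_le_gradLinf hbdd h) huw
end

section
/- Let G=(V,E) be a countably infinite, locally finite simple graph and let v₁,v₂,… be a bijective enumeration of V such that for all N ∈ ℕ both ∂_V(N) = #∂_E({v₁,…,v_N}) (where ∂_V(N) is the vertex-isoperimetric profile) and ∂_V({v₁,…,v_N}) ⊆ {v₁,…,v_{N+∂_V(N)}}. Then for every finitely supported f : V → ℝ_{≥0} and every real p with 1 ≤ p < ∞, and also for p = ∞, the rearrangement f* associated to this enumeration satisfies ‖∇f*‖_{L^p} ≤ ‖∇f‖_{L^p}. -/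
open Real

/-!
Everything is governed by the number of edges crossing a band `a < b`, i.e. with one endpoint
at most `a` and the other at least `b`.

For the rearrangement `f*` the level sets `{f* ≥ b}` and `{f* > a}` are initial segments
`v '' [0, M)` and `v '' [0, N)`, and the hypotheses say that `v '' [0, M)` has exactly `∂_V(M)`
boundary edges and the boundary vertices `v '' [M, M + ∂_V(M))`. Each of those vertices below
`N` takes up one boundary edge that does not cross, so `f*` has at most `∂_V(M) - (N - M)`
crossing edges. For `f`, the set `{f ≥ b}` also has `M` elements, hence at least `∂_V(M)`
boundary vertices; at most `N - M` of them lie above `a`, and each other one is the low end of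
a crossing edge of `f`.

Crossing counts control the gradients. On a grid `w₀ < ⋯ < wₙ` of all values, `(y - x)₊ ^ p`
is, by two-dimensional telescoping, a combination of the indicators `[x ≤ wᵢ ∧ wⱼ₊₁ ≤ y]` with
the mixed second differences of `(i, j) ↦ (wⱼ - wᵢ)₊ ^ p` as weights, and these are nonnegative
by convexity. For `p = ∞`, an edge of `f*` with gap `b - a` makes `f` cross the band `(a, b)`.
-/

theorem ConvexOn.add_le_add_of_add_eq {φ : ℝ → ℝ} (hφ : ConvexOn ℝ Set.univ φ)
    {u a b U : ℝ} (hua : u ≤ a) (haU : a ≤ U) (hsum : a + b = u + U) :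
    φ a + φ b ≤ φ u + φ U := by
  rcases hua.trans haU |>.eq_or_lt with huU | huU
  · obtain rfl : a = u := le_antisymm (huU ▸ haU) hua
    obtain rfl : b = U := by linarith
    rw [add_comm]
  set θ := (a - u) / (U - u) with hθ
  have hUu : 0 < U - u := sub_pos.mpr huU
  have hθ0 : 0 ≤ θ := div_nonneg (sub_nonneg.mpr hua) hUu.le
  have hθ1 : θ ≤ 1 := (div_le_one hUu).mpr (by linarith)
  have ha : θ • U + (1 - θ) • u = a := by
    simp only [smul_eq_mul, hθ]; field_simp; ring
  have hb : (1 - θ) • U + θ • u = b := by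
    simp only [smul_eq_mul] at ha ⊢; linarith
  have h₁ := hφ.2 (Set.mem_univ U) (Set.mem_univ u) hθ0 (sub_nonneg.2 hθ1) (add_sub_cancel θ 1)
  have h₂ := hφ.2 (Set.mem_univ U) (Set.mem_univ u) (sub_nonneg.2 hθ1) hθ0 (sub_add_cancel 1 θ)
  rw [ha] at h₁
  rw [hb] at h₂
  simp only [smul_eq_mul] at h₁ h₂
  linarith

theorem convexOn_max_zero_rpow {p : ℝ} (hp : 1 ≤ p) :
    ConvexOn ℝ Set.univ (fun r : ℝ => max r 0 ^ p) := by
  have hrange : (fun r : ℝ => max r 0) '' Set.univ = Set.Ici 0 := by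
    ext r
    refine ⟨fun ⟨s, _, hs⟩ => hs ▸ le_max_right s 0, fun hr => ⟨r, trivial, max_eq_left hr⟩⟩
  refine ConvexOn.comp (g := fun r => r ^ p) (hrange ▸ convexOn_rpow hp)
    ((convexOn_id convex_univ).sup (convexOn_const 0 convex_univ)) ?_
  rw [hrange]
  exact fun x hx y _ hxy => Real.rpow_le_rpow hx hxy (by linarith)

theorem Finset.exists_strictMonoOn_Iic_superset {α : Type*} [LinearOrder α] [Inhabited α]
    (W : Finset α) : ∃ n : ℕ, ∃ w : ℕ → α, StrictMonoOn w (Set.Iic n) ∧ ↑W ⊆ w '' Set.Iic n := by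
  set e := W.orderEmbOfFin rfl
  refine ⟨W.card - 1, fun k => if h : k < W.card then e ⟨k, h⟩ else default, ?_, ?_⟩
  · intro k _ l hl hkl
    have hl' : l < W.card := by rw [Set.mem_Iic] at hl; omega
    simp only [dif_pos (hkl.trans hl'), dif_pos hl']
    exact e.strictMono (Fin.mk_lt_mk.mpr hkl)
  · intro x hx
    obtain ⟨i, rfl⟩ : x ∈ Set.range e := by rwa [Finset.range_orderEmbOfFin]
    exact ⟨i, by rw [Set.mem_Iic]; omega, dif_pos i.isLt⟩

section MixedDiff

variable (φ : ℝ → ℝ) (w : ℕ → ℝ)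

noncomputable def mixedDiff (i j : ℕ) : ℝ :=
  φ (w (j + 1) - w i) - φ (w j - w i) - (φ (w (j + 1) - w (i + 1)) - φ (w j - w (i + 1)))

variable {φ w} {n : ℕ}

theorem mixedDiff_nonneg (hφ : ConvexOn ℝ Set.univ φ) {i j : ℕ} (hi : w i ≤ w (i + 1))
    (hj : w j ≤ w (j + 1)) : 0 ≤ mixedDiff φ w i j := by
  have := hφ.add_le_add_of_add_eq (u := w j - w (i + 1)) (a := w j - w i)
    (b := w (j + 1) - w (i + 1)) (U := w (j + 1) - w i) (by linarith) (by linarith) (by ring)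
  rw [mixedDiff]
  linarith

theorem mixedDiff_eq_zero (hφ0 : ∀ r ≤ 0, φ r = 0) {i j : ℕ} (hj : w j ≤ w (j + 1))
    (hji : w (j + 1) ≤ w i) (hi : w i ≤ w (i + 1)) : mixedDiff φ w i j = 0 := by
  rw [mixedDiff, hφ0 _ (by linarith), hφ0 _ (by linarith), hφ0 _ (by linarith),
    hφ0 _ (by linarith)]
  ring

theorem sum_Ico_sum_Ico_mixedDiff {a b c d : ℕ} (hac : a ≤ c) (hbd : b ≤ d) :
    ∑ i ∈ Finset.Ico a c, ∑ j ∈ Finset.Ico b d, mixedDiff φ w i j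
      = φ (w d - w a) - φ (w b - w a) - (φ (w d - w c) - φ (w b - w c)) := by
  set F : ℕ → ℕ → ℝ := fun i j => φ (w j - w i)
  have inner : ∀ i, ∑ j ∈ Finset.Ico b d, mixedDiff φ w i j
      = F i d - F i b - (F (i + 1) d - F (i + 1) b) := fun i => by
    rw [← Finset.sum_Ico_sub (F i) hbd, ← Finset.sum_Ico_sub (F (i + 1)) hbd,
      ← Finset.sum_sub_distrib]
    rfl
  calc ∑ i ∈ Finset.Ico a c, ∑ j ∈ Finset.Ico b d, mixedDiff φ w i j
      = ∑ i ∈ Finset.Ico a c, -((F (i + 1) d - F (i + 1) b) - (F i d - F i b)) :=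
        Finset.sum_congr rfl fun i _ => by rw [inner]; ring
    _ = _ := by rw [Finset.sum_neg_distrib, Finset.sum_Ico_sub (fun i => F i d - F i b) hac]; ring

theorem comp_sub_eq_sum_ite_mixedDiff (hφ0 : ∀ r ≤ 0, φ r = 0) (hw : StrictMonoOn w (Set.Iic n))
    {x y : ℝ} (hx : x ∈ w '' Set.Iic n) (hy : y ∈ w '' Set.Iic n) :
    φ (y - x) = ∑ i ∈ Finset.range n, ∑ j ∈ Finset.range n,
      if x ≤ w i ∧ w (j + 1) ≤ y then mixedDiff φ w i j else 0 := by
  obtain ⟨a, ha, rfl⟩ := hx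
  obtain ⟨b, hb, rfl⟩ := hy
  rw [Set.mem_Iic] at ha hb
  have hfa : (Finset.range n).filter (fun i => w a ≤ w i) = Finset.Ico a n := by
    ext i
    simp only [Finset.mem_filter, Finset.mem_range, Finset.mem_Ico]
    constructor
    · rintro ⟨hin, hai⟩
      exact ⟨(hw.le_iff_le ha hin.le).mp hai, hin⟩
    · rintro ⟨hai, hin⟩
      exact ⟨hin, (hw.le_iff_le ha hin.le).mpr hai⟩
  have hfb : (Finset.range n).filter (fun j => w (j + 1) ≤ w b) = Finset.Ico 0 b := by
    ext j
    simp only [Finset.mem_filter, Finset.mem_range, Finset.mem_Ico, zero_le, true_and]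
    constructor
    · rintro ⟨hjn, hjb⟩
      exact (hw.le_iff_le (Set.mem_Iic.mpr hjn) hb).mp hjb
    · intro hjb
      exact ⟨by omega, (hw.le_iff_le (Set.mem_Iic.mpr (by omega)) hb).mpr hjb⟩
  simp_rw [ite_and, Finset.sum_ite_irrel, Finset.sum_const_zero, ← Finset.sum_filter, hfa, hfb]
  have hmono := hw.monotoneOn
  rw [sum_Ico_sum_Ico_mixedDiff ha (Nat.zero_le b),
    hφ0 (w 0 - w a) (sub_nonpos.mpr (hmono (by simp) (by simpa) (Nat.zero_le a))),
    hφ0 (w b - w n) (sub_nonpos.mpr (hmono (by simpa) (by simp) hb)),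
    hφ0 (w 0 - w n) (sub_nonpos.mpr (hmono (by simp) (by simp) (Nat.zero_le n)))]
  ring

theorem sum_comp_sub_eq_sum_card_mul_mixedDiff {ι : Type*} (hφ0 : ∀ r ≤ 0, φ r = 0)
    (hw : StrictMonoOn w (Set.Iic n)) {s : Finset ι} {lo hi : ι → ℝ}
    (hlo : ∀ k ∈ s, lo k ∈ w '' Set.Iic n) (hhi : ∀ k ∈ s, hi k ∈ w '' Set.Iic n) :
    ∑ k ∈ s, φ (hi k - lo k) = ∑ i ∈ Finset.range n, ∑ j ∈ Finset.range n,
      ((s.filter fun k => lo k ≤ w i ∧ w (j + 1) ≤ hi k).card : ℝ) * mixedDiff φ w i j := by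
  rw [Finset.sum_congr rfl fun k hk => comp_sub_eq_sum_ite_mixedDiff hφ0 hw (hlo k hk) (hhi k hk),
    Finset.sum_comm]
  refine Finset.sum_congr rfl fun i _ => ?_
  rw [Finset.sum_comm]
  refine Finset.sum_congr rfl fun j _ => ?_
  rw [← Finset.sum_filter, Finset.sum_const, nsmul_eq_mul]

theorem sum_comp_sub_le_of_card_crossing_le {ι κ : Type*} (hφ : ConvexOn ℝ Set.univ φ)
    (hφ0 : ∀ r ≤ 0, φ r = 0) {s : Finset ι} {t : Finset κ} {lo hi : ι → ℝ} {lo' hi' : κ → ℝ}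
    (hcross : ∀ a b, a < b → (s.filter fun k => lo k ≤ a ∧ b ≤ hi k).card
      ≤ (t.filter fun k => lo' k ≤ a ∧ b ≤ hi' k).card) :
    ∑ k ∈ s, φ (hi k - lo k) ≤ ∑ k ∈ t, φ (hi' k - lo' k) := by
  classical
  obtain ⟨n, w, hw, hW⟩ :=
    (s.image lo ∪ s.image hi ∪ t.image lo' ∪ t.image hi').exists_strictMonoOn_Iic_superset
  have hmono : ∀ i ∈ Finset.range n, w i ≤ w (i + 1) := fun i hi => hw.monotoneOn
    (Set.mem_Iic.mpr (Finset.mem_range.mp hi).le) (Set.mem_Iic.mpr (Finset.mem_range.mp hi))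
    (Nat.le_succ i)
  rw [sum_comp_sub_eq_sum_card_mul_mixedDiff hφ0 hw (fun k hk => hW (by aesop))
      (fun k hk => hW (by aesop)),
    sum_comp_sub_eq_sum_card_mul_mixedDiff hφ0 hw (fun k hk => hW (by aesop))
      (fun k hk => hW (by aesop))]
  refine Finset.sum_le_sum fun i hi => Finset.sum_le_sum fun j hj => ?_
  rcases lt_or_ge (w i) (w (j + 1)) with hlt | hge
  · exact mul_le_mul_of_nonneg_right (by exact_mod_cast hcross _ _ hlt)
      (mixedDiff_nonneg hφ (hmono i hi) (hmono j hj))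
  · rw [mixedDiff_eq_zero hφ0 (hmono j hj) hge (hmono i hi), mul_zero, mul_zero]

end MixedDiff

theorem tsum_subtype_eq_sum {β M : Type*} [AddCommMonoid M] [TopologicalSpace M] {T : Set β}
    {s : Finset β} (hs : ↑s ⊆ T) {F : β → M} (hF : ∀ e ∈ T, e ∉ s → F e = 0) :
    ∑' e : T, F e = ∑ e ∈ s, F e := by
  rw [tsum_subtype T F,
    tsum_eq_sum fun e he => Set.indicator_apply_eq_zero.mpr fun hT => hF e hT he]
  exact Finset.sum_congr rfl fun e he => Set.indicator_of_mem (hs he) F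

theorem Sym2.inf_map_le_and_le_sup_map_iff {V : Type*} (h : V → ℝ) (e : Sym2 V) {a b : ℝ} :
    (e.map h).inf ≤ a ∧ b ≤ (e.map h).sup ↔ ∃ x y, e = s(x, y) ∧ b ≤ h x ∧ h y ≤ a := by
  induction e using Sym2.ind with
  | h u w =>
    simp only [Sym2.map_mk, Sym2.inf_mk, Sym2.sup_mk]
    constructor
    · rintro ⟨hlo, hhi⟩
      rcases le_total (h u) (h w) with huw | hwu
      · exact ⟨w, u, Sym2.eq_swap, by simpa [huw] using hhi, by simpa [huw] using hlo⟩
      · exact ⟨u, w, rfl, by simpa [hwu] using hhi, by simpa [hwu] using hlo⟩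
    · rintro ⟨x, y, hxy, hx, hy⟩
      rcases Sym2.eq_iff.mp hxy with ⟨rfl, rfl⟩ | ⟨rfl, rfl⟩
      · exact ⟨inf_le_right.trans hy, hx.trans le_sup_left⟩
      · exact ⟨inf_le_left.trans hy, hx.trans le_sup_right⟩

def crossingEdges {V : Type*} (G : SimpleGraph V) (h : V → ℝ) (a b : ℝ) : Set (Sym2 V) :=
  {e | e ∈ G.edgeSet ∧ ∃ x y, e = s(x, y) ∧ b ≤ h x ∧ h y ≤ a}

section Graph

variable {V : Type*} {G : SimpleGraph V}

theorem IsRearrangement.support_finite {v : ℕ → V} {f g : V → ℝ}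
    (hre : IsRearrangement v f g) (hsupp : (Function.support f).Finite) :
    (Function.support g).Finite := by
  obtain ⟨⟨σ, rfl⟩, -⟩ := hre
  rw [Function.support_comp_eq_preimage]
  exact hsupp.preimage σ.injective.injOn

theorem IsRearrangement.ncard_preimage {v : ℕ → V} {f g : V → ℝ}
    (hre : IsRearrangement v f g) (S : Set ℝ) : (g ⁻¹' S).ncard = (f ⁻¹' S).ncard := by
  obtain ⟨⟨σ, rfl⟩, -⟩ := hre
  rw [Set.preimage_comp]
  exact Set.ncard_preimage_of_injective_subset_range σ.injective (by simp)

theorem eq_image_Iio_ncard {v : ℕ → V} (hv : Function.Bijective v) {S : Set V}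
    (hS : S.Finite) (hlow : IsLowerSet (v ⁻¹' S)) : S = v '' Set.Iio S.ncard := by
  obtain ⟨m, hm⟩ := hlow.eq_univ_or_Iio.resolve_left fun h =>
    Set.infinite_univ (h ▸ hS.preimage hv.injective.injOn)
  have himg : v '' (v ⁻¹' S) = S := Set.image_preimage_eq S hv.surjective
  rw [← himg, hm, Set.ncard_image_of_injective _ hv.injective, Set.ncard_Iio_nat]

theorem IsRearrangement.preimage_eq_image_Iio {v : ℕ → V} (hv : Function.Bijective v)
    {f g : V → ℝ} (hre : IsRearrangement v f g) {S : Set ℝ} (hS : IsUpperSet S)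
    (hfin : (g ⁻¹' S).Finite) : g ⁻¹' S = v '' Set.Iio (f ⁻¹' S).ncard := by
  rw [← hre.ncard_preimage S]
  exact eq_image_Iio_ncard hv hfin fun m n hnm hm => hS (hre.2 n m hnm) hm

theorem finite_biUnion_incidenceSet (hloc : ∀ a : V, (G.neighborSet a).Finite) {S : Set V}
    (hS : S.Finite) : (⋃ x ∈ S, G.incidenceSet x).Finite := by
  classical
  refine hS.biUnion fun x _ => ?_
  have := (hloc x).to_subtype
  exact Set.finite_coe_iff.mp (Finite.of_equiv _ (G.incidenceSetEquivNeighborSet x).symm)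

theorem edgeBoundary_finite (hloc : ∀ a : V, (G.neighborSet a).Finite) {A : Set V}
    (hA : A.Finite) : (edgeBoundary G A).Finite := by
  refine (finite_biUnion_incidenceSet hloc hA).subset ?_
  rintro e ⟨he, u, w, rfl, hu, -⟩
  exact Set.mem_biUnion hu ⟨he, Sym2.mem_mk_left u w⟩

theorem crossingEdges_subset_biUnion_incidenceSet {h : V → ℝ} {a b : ℝ} (hab : a < b) :
    crossingEdges G h a b ⊆ ⋃ x ∈ Function.support h, G.incidenceSet x := by
  rintro e ⟨he, x, y, rfl, hx, hy⟩
  by_cases hx0 : h x = 0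
  · have hy0 : h y ≠ 0 := fun hy0 => by linarith
    exact Set.mem_biUnion hy0 ⟨he, Sym2.mem_mk_right x y⟩
  · exact Set.mem_biUnion hx0 ⟨he, Sym2.mem_mk_left x y⟩

theorem crossingEdges_finite (hloc : ∀ a : V, (G.neighborSet a).Finite) {h : V → ℝ}
    (hsupp : (Function.support h).Finite) {a b : ℝ} (hab : a < b) :
    (crossingEdges G h a b).Finite :=
  (finite_biUnion_incidenceSet hloc hsupp).subset (crossingEdges_subset_biUnion_incidenceSet hab)

theorem vertexProfile_le_ncard_vertexBoundary {A : Set V} (hA : A.Finite) :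
    vertexProfile G A.ncard ≤ (vertexBoundary G A).ncard :=
  Nat.sInf_le ⟨A, hA, rfl, rfl⟩

theorem ncard_le_ncard_of_subset_vertexBoundary {A Y : Set V} {E : Set (Sym2 V)}
    (hY : Y ⊆ vertexBoundary G A) (hE : E.Finite)
    (hAE : ∀ z ∈ A, ∀ y ∈ Y, G.Adj z y → s(z, y) ∈ E) : Y.ncard ≤ E.ncard := by
  have hnbr : ∀ y ∈ Y, ∃ z, z ∈ A ∧ G.Adj y z := fun y hy => (hY hy).2
  choose! z hzA hzy using hnbr
  refine Set.ncard_le_ncard_of_injOn (fun y => s(z y, y))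
    (fun y hy => hAE _ (hzA y hy) y hy (hzy y hy).symm) ?_ hE
  intro y₁ hy₁ y₂ hy₂ heq
  rcases Sym2.eq_iff.mp heq with ⟨-, h⟩ | ⟨h, -⟩
  · exact h
  · exact absurd (h ▸ hzA y₁ hy₁) (hY hy₂).1

theorem vertexBoundary_image_Iio {v : ℕ → V} (hv : Function.Injective v) {N : ℕ}
    (hvert : vertexBoundary G (v '' Set.Iio N) ⊆ v '' Set.Iio (N + vertexProfile G N)) :
    vertexBoundary G (v '' Set.Iio N) = v '' Set.Ico N (N + vertexProfile G N) := by
  have hsub : vertexBoundary G (v '' Set.Iio N) ⊆ v '' Set.Ico N (N + vertexProfile G N) := by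
    intro y hy
    obtain ⟨i, hi, rfl⟩ := hvert hy
    exact ⟨i, ⟨not_lt.mp fun hiN => hy.1 ⟨i, hiN, rfl⟩, hi⟩, rfl⟩
  refine Set.eq_of_subset_of_ncard_le hsub ?_ ((Set.finite_Ico _ _).image v)
  have := vertexProfile_le_ncard_vertexBoundary (G := G) ((Set.finite_Iio N).image v)
  rw [Set.ncard_image_of_injective _ hv, Set.ncard_Iio_nat] at this
  rwa [Set.ncard_image_of_injective _ hv, Set.ncard_Ico_nat, Nat.add_sub_cancel_left]

theorem ncard_crossingEdges_add_le (hloc : ∀ a : V, (G.neighborSet a).Finite) {v : ℕ → V}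
    (hv : Function.Injective v) {M N : ℕ}
    (hedge : vertexProfile G M = (edgeBoundary G (v '' Set.Iio M)).ncard)
    (hvert : vertexBoundary G (v '' Set.Iio M) ⊆ v '' Set.Iio (M + vertexProfile G M))
    {g : V → ℝ} {a b : ℝ} (hab : a < b) (hT : g ⁻¹' Set.Ici b = v '' Set.Iio M)
    (hU : g ⁻¹' Set.Ioi a = v '' Set.Iio N) :
    (crossingEdges G g a b).ncard + (min (M + vertexProfile G M) N - M) ≤ vertexProfile G M := by
  set T := v '' Set.Iio M
  have hET : (edgeBoundary G T).Finite := edgeBoundary_finite hloc ((Set.finite_Iio M).image v)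
  have hCE : crossingEdges G g a b ⊆ edgeBoundary G T := by
    rintro e ⟨he, x, y, rfl, hx, hy⟩
    refine ⟨he, x, y, rfl, hT ▸ hx, fun hyT => ?_⟩
    have : b ≤ g y := by rw [← hT] at hyT; exact hyT
    linarith
  -- the boundary vertices of `T` above level `a`; an edge from `T` to one of them is not crossing
  set X := v '' Set.Ico M (min (M + vertexProfile G M) N)
  have hX : X ⊆ vertexBoundary G T := by
    rw [vertexBoundary_image_Iio hv hvert]
    exact Set.image_mono (Set.Ico_subset_Ico_right (min_le_left _ _))
  have hXU : X ⊆ g ⁻¹' Set.Ioi a := by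
    rw [hU]
    exact Set.image_mono fun i hi => hi.2.trans_le (min_le_right _ _)
  have hXE : X.ncard ≤ (edgeBoundary G T \ crossingEdges G g a b).ncard := by
    refine ncard_le_ncard_of_subset_vertexBoundary hX hET.sdiff fun z hz y hy hzy =>
      ⟨⟨hzy, z, y, rfl, hz, (hX hy).1⟩, ?_⟩
    rintro ⟨-, x', y', heq, hx', hy'⟩
    rcases Sym2.eq_iff.mp heq with ⟨-, rfl⟩ | ⟨-, rfl⟩
    · exact (hy'.trans_lt (hXU hy)).false
    · exact (hX hy).1 (by rw [← hT]; exact hx')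
  rw [Set.ncard_sdiff hCE (hET.subset hCE), ← hedge, Set.ncard_image_of_injective _ hv,
    Set.ncard_Ico_nat] at hXE
  have := (Set.ncard_le_ncard hCE hET).trans_eq hedge.symm
  omega

theorem vertexProfile_le_ncard_crossingEdges_add (hloc : ∀ a : V, (G.neighborSet a).Finite)
    {f : V → ℝ} (hsupp : (Function.support f).Finite) {a b : ℝ} (ha : 0 ≤ a) (hab : a < b) :
    vertexProfile G (f ⁻¹' Set.Ici b).ncard ≤
      (crossingEdges G f a b).ncard + ((f ⁻¹' Set.Ioi a).ncard - (f ⁻¹' Set.Ici b).ncard) := by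
  set A := f ⁻¹' Set.Ici b
  set U := f ⁻¹' Set.Ioi a
  have hU : U.Finite := hsupp.subset fun x hx => (ha.trans_lt hx).ne'
  have hAU : A ⊆ U := Set.preimage_mono (Set.Ici_subset_Ioi.mpr hab)
  have hA : A.Finite := hU.subset hAU
  -- a boundary vertex of `A` outside `U` is the low end of a crossing edge
  have hYC : (vertexBoundary G A \ (U \ A)).ncard ≤ (crossingEdges G f a b).ncard :=
    ncard_le_ncard_of_subset_vertexBoundary Set.sdiff_subset (crossingEdges_finite hloc hsupp hab)
      fun z hz y hy hzy => ⟨hzy, z, y, rfl, hz, not_lt.mp fun hya => hy.2 ⟨hya, hy.1.1⟩⟩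
  calc vertexProfile G A.ncard ≤ (vertexBoundary G A).ncard :=
        vertexProfile_le_ncard_vertexBoundary hA
    _ ≤ (vertexBoundary G A \ (U \ A)).ncard + (U \ A).ncard :=
        Set.ncard_le_ncard_sdiff_add_ncard _ _ hU.sdiff
    _ ≤ _ := by rw [Set.ncard_sdiff hAU hA]; omega

theorem ncard_crossingEdges_le_of_isRearrangement (hloc : ∀ a : V, (G.neighborSet a).Finite)
    {v : ℕ → V} (hv : Function.Bijective v)
    (hedge : ∀ N : ℕ, vertexProfile G N = (edgeBoundary G (v '' Set.Iio N)).ncard)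
    (hvert : ∀ N : ℕ,
      vertexBoundary G (v '' Set.Iio N) ⊆ v '' Set.Iio (N + vertexProfile G N))
    {f g : V → ℝ} (hsupp : (Function.support f).Finite) (hpos : ∀ x, 0 ≤ f x)
    (hre : IsRearrangement v f g) {a b : ℝ} (hab : a < b) :
    (crossingEdges G g a b).ncard ≤ (crossingEdges G f a b).ncard := by
  rcases lt_or_ge a 0 with ha | ha
  · have hempty : crossingEdges G g a b = ∅ := by
      obtain ⟨⟨σ, rfl⟩, -⟩ := hre
      exact Set.eq_empty_iff_forall_notMem.mpr fun e ⟨_, x, y, _, _, hy⟩ =>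
        (hpos (σ y)).not_gt (hy.trans_lt ha)
    simp [hempty]
  have hUg : (g ⁻¹' Set.Ioi a).Finite :=
    (hre.support_finite hsupp).subset fun x hx => (ha.trans_lt hx).ne'
  have h₁ := ncard_crossingEdges_add_le hloc hv.injective (hedge _) (hvert _) hab
    (hre.preimage_eq_image_Iio hv (isUpperSet_Ici b)
      (hUg.subset (Set.preimage_mono (Set.Ici_subset_Ioi.mpr hab))))
    (hre.preimage_eq_image_Iio hv (isUpperSet_Ioi a) hUg)
  have h₂ := vertexProfile_le_ncard_crossingEdges_add (G := G) hloc hsupp ha hab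
  omega

theorem gradLp_eq_sum {h : V → ℝ} {p : ℝ} (hp : p ≠ 0) {s : Finset (Sym2 V)}
    (hs : ↑s ⊆ G.edgeSet) (hzero : ∀ e ∈ G.edgeSet, e ∉ s → ∀ x ∈ e, h x = 0) :
    gradLp G h p = (∑ e ∈ s, ((e.map h).sup - (e.map h).inf) ^ p) ^ (1 / p) := by
  rw [gradLp, tsum_subtype_eq_sum hs]
  · congr 1
    refine Finset.sum_congr rfl fun e _ => ?_
    induction e using Sym2.ind with
    | h u w => simp [max_sub_min_eq_abs']
  · intro e he hes
    induction e using Sym2.ind with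
    | h u w =>
      simp [hzero _ he hes u (Sym2.mem_mk_left u w), hzero _ he hes w (Sym2.mem_mk_right u w),
        Real.zero_rpow hp]

theorem card_filter_eq_ncard_crossingEdges {h : V → ℝ} {a b : ℝ} {s : Finset (Sym2 V)}
    (hs : ↑s ⊆ G.edgeSet) (hcs : crossingEdges G h a b ⊆ ↑s) :
    (s.filter fun e => (e.map h).inf ≤ a ∧ b ≤ (e.map h).sup).card
      = (crossingEdges G h a b).ncard := by
  rw [← Set.ncard_coe_finset]
  congr 1
  ext e
  simp only [Finset.coe_filter, Set.mem_ofPred_eq, Sym2.inf_map_le_and_le_sup_map_iff]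
  exact ⟨fun ⟨hes, hc⟩ => ⟨hs hes, hc⟩, fun hc => ⟨hcs hc, hc.2⟩⟩

theorem gradLp_le_of_ncard_crossingEdges_le (hloc : ∀ a : V, (G.neighborSet a).Finite)
    {h₁ h₂ : V → ℝ} (hs₁ : (Function.support h₁).Finite) (hs₂ : (Function.support h₂).Finite)
    (hcross : ∀ a b, a < b → (crossingEdges G h₁ a b).ncard ≤ (crossingEdges G h₂ a b).ncard)
    {p : ℝ} (hp : 1 ≤ p) : gradLp G h₁ p ≤ gradLp G h₂ p := by
  set S := Function.support h₁ ∪ Function.support h₂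
  have hE := finite_biUnion_incidenceSet hloc (hs₁.union hs₂)
  set s := hE.toFinset
  have hsG : ↑s ⊆ G.edgeSet := by
    rw [Set.Finite.coe_toFinset]
    exact Set.iUnion₂_subset fun x _ => G.incidenceSet_subset x
  have hzero : ∀ h : V → ℝ, Function.support h ⊆ S →
      ∀ e ∈ G.edgeSet, e ∉ s → ∀ x ∈ e, h x = 0 := fun h hh e he hes x hx =>
    by_contra fun hx0 => hes (hE.mem_toFinset.mpr (Set.mem_biUnion (hh hx0) ⟨he, hx⟩))
  have hcard : ∀ h : V → ℝ, Function.support h ⊆ S → ∀ a b, a < b →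
      (s.filter fun e => (e.map h).inf ≤ a ∧ b ≤ (e.map h).sup).card
        = (crossingEdges G h a b).ncard := fun h hh a b hab =>
    card_filter_eq_ncard_crossingEdges hsG <| by
      rw [Set.Finite.coe_toFinset]
      exact (crossingEdges_subset_biUnion_incidenceSet hab).trans
        (Set.biUnion_mono hh fun _ _ => subset_rfl)
  have hp0 : p ≠ 0 := (zero_lt_one.trans_le hp).ne'
  rw [gradLp_eq_sum hp0 hsG (hzero h₁ Set.subset_union_left),
    gradLp_eq_sum hp0 hsG (hzero h₂ Set.subset_union_right)]
  refine Real.rpow_le_rpow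
    (Finset.sum_nonneg fun e _ => Real.rpow_nonneg (sub_nonneg.2 (Sym2.inf_le_sup _)) p) ?_
    (by positivity)
  have hsum := sum_comp_sub_le_of_card_crossing_le (convexOn_max_zero_rpow hp)
    (fun r hr => by rw [max_eq_right hr, Real.zero_rpow hp0])
    (s := s) (t := s) (lo := fun e => (e.map h₁).inf) (hi := fun e => (e.map h₁).sup)
    (lo' := fun e => (e.map h₂).inf) (hi' := fun e => (e.map h₂).sup) fun a b hab => by
      rw [hcard h₁ Set.subset_union_left a b hab, hcard h₂ Set.subset_union_right a b hab]
      exact hcross a b hab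
  have hmax : ∀ (h : V → ℝ) (e : Sym2 V),
      max ((e.map h).sup - (e.map h).inf) 0 = (e.map h).sup - (e.map h).inf :=
    fun h e => max_eq_left (sub_nonneg.2 (Sym2.inf_le_sup _))
  simpa only [hmax] using hsum

theorem gradLinf_le_of_ncard_crossingEdges_le (hloc : ∀ a : V, (G.neighborSet a).Finite)
    {h₁ h₂ : V → ℝ} (hs₁ : (Function.support h₁).Finite) (hs₂ : (Function.support h₂).Finite)
    (hcross : ∀ a b, a < b → (crossingEdges G h₁ a b).ncard ≤ (crossingEdges G h₂ a b).ncard) :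
    gradLinf G h₁ ≤ gradLinf G h₂ := by
  have hfin : (Set.range h₂).Finite :=
    ((hs₂.image h₂).insert 0).subset (Function.range_subset_insert_image_support h₂)
  obtain ⟨C, hC⟩ := hfin.bddAbove
  obtain ⟨c, hc⟩ := hfin.bddBelow
  have hbdd : BddAbove (Set.range fun e : G.edgeSet =>
      Sym2.lift ⟨fun u w => |h₂ u - h₂ w|, fun u w => abs_sub_comm _ _⟩ e.1) := by
    refine ⟨C - c, ?_⟩
    rintro _ ⟨⟨e, -⟩, rfl⟩
    induction e using Sym2.ind with
    | h u w =>
      simp only [Sym2.lift_mk, abs_sub_le_iff]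
      constructor <;> linarith [hC ⟨u, rfl⟩, hC ⟨w, rfl⟩, hc ⟨u, rfl⟩, hc ⟨w, rfl⟩]
  rw [gradLinf, gradLinf]
  refine Real.iSup_le (fun ⟨e, he⟩ => ?_) (Real.iSup_nonneg fun ⟨e, _⟩ => ?_)
  · induction e using Sym2.ind with
    | h u w =>
      simp only [Sym2.lift_mk]
      rcases (min_le_max : min (h₁ u) (h₁ w) ≤ max (h₁ u) (h₁ w)).lt_or_eq with hlt | heq
      · have hmem : s(u, w) ∈ crossingEdges G h₁ (min (h₁ u) (h₁ w)) (max (h₁ u) (h₁ w)) :=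
          ⟨he, (Sym2.inf_map_le_and_le_sup_map_iff h₁ _).mp ⟨le_rfl, le_rfl⟩⟩
        obtain ⟨_, he', x, y, rfl, hx, hy⟩ := Set.nonempty_of_ncard_ne_zero
          (((Set.ncard_pos (crossingEdges_finite hloc hs₁ hlt)).mpr ⟨_, hmem⟩).trans_le
            (hcross _ _ hlt)).ne'
        calc |h₁ u - h₁ w| = max (h₁ u) (h₁ w) - min (h₁ u) (h₁ w) :=
              (max_sub_min_eq_abs' _ _).symm
          _ ≤ |h₂ x - h₂ y| := by linarith [le_abs_self (h₂ x - h₂ y)]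
          _ ≤ _ := le_ciSup hbdd ⟨s(x, y), he'⟩
      · calc |h₁ u - h₁ w| = 0 := by rw [← max_sub_min_eq_abs', heq, sub_self]
          _ ≤ |h₂ u - h₂ w| := abs_nonneg _
          _ ≤ _ := le_ciSup hbdd ⟨s(u, w), he⟩
  · induction e using Sym2.ind with
    | h u w => exact abs_nonneg _

end Graph

/-- **full range Polya-Szegő.** Let `G` be a countably infinite locally
finite graph and `v` an enumeration of the vertices such that for all `N` one has
`∂_V(N) = #∂_E({v₁,…,v_N})` and `∂_V({v₁,…,v_N}) ⊆ {v₁,…,v_{N+∂_V(N)}}`. Then the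
associated rearrangement satisfies `‖∇f*‖_{L^p} ≤ ‖∇f‖_{L^p}` for all `1 ≤ p < ∞`
and for `p = ∞`. -/
theorem polya_szego_full_range {V : Type*} (G : SimpleGraph V)
    (hloc : ∀ a : V, (G.neighborSet a).Finite)
    (v : ℕ → V) (hv : Function.Bijective v)
    (hedge : ∀ N : ℕ, vertexProfile G N = (edgeBoundary G (v '' Set.Iio N)).ncard)
    (hvert : ∀ N : ℕ,
      vertexBoundary G (v '' Set.Iio N) ⊆ v '' Set.Iio (N + vertexProfile G N))
    (f fstar : V → ℝ) (hsupp : (Function.support f).Finite) (hpos : ∀ x, 0 ≤ f x)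
    (hre : IsRearrangement v f fstar) :
    (∀ p : ℝ, 1 ≤ p → gradLp G fstar p ≤ gradLp G f p) ∧
      gradLinf G fstar ≤ gradLinf G f := by
  have hcross : ∀ a b, a < b →
      (crossingEdges G fstar a b).ncard ≤ (crossingEdges G f a b).ncard := fun _ _ hab =>
    ncard_crossingEdges_le_of_isRearrangement hloc hv hedge hvert hsupp hpos hre hab
  have hsupp' := hre.support_finite hsupp
  exact ⟨fun p hp => gradLp_le_of_ncard_crossingEdges_le hloc hsupp' hsupp hcross hp,
    gradLinf_le_of_ncard_crossingEdges_le hloc hsupp' hsupp hcross⟩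
end

section
/- (Modified coarea formula) Let G=(V,E) be a locally finite simple graph, let 1 ≤ p < ∞, and let f : V → ℝ be finitely supported with 0 ≤ f ≤ 1. Then ∑_{{u,w}∈E} |f(u)−f(w)|^p = p·∫₀¹ ( ∑_{{u,w} ∈ ∂_E{f ≥ s}} |min(f(u),s) − min(f(w),s)|^{p−1} ) ds, where {f ≥ s} = {v ∈ V : f(v) ≥ s} and the inner sum runs over the edges of the edge boundary of {f ≥ s}. -/
open Real

/-!
An edge `{u, w}` with `f u ≤ f w` lies in `∂_E{f ≥ s}` exactly when `s ∈ (f u, f w]`, and for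
such `s` the truncated gap `|min (f u) s - min (f w) s|` equals `s - f u`. Since `0 ≤ f ≤ 1`, the
edge therefore contributes `p ∫_{f u}^{f w} (s - f u)^(p-1) ds = |f u - f w|^p` to the right-hand
side. Only the finitely many edges with `f u ≠ f w` contribute to either side (local finiteness
and finite support), so the sum over edges and the integral commute.
-/

open MeasureTheory Set
open scoped Interval

section TruncatedGap

variable {p : ℝ}

lemma abs_min_sub_min_rpow_eqOn_Ioc (a b q : ℝ) :
    EqOn (fun s => |min a s - min b s| ^ q) (fun s => (s - a) ^ q) (Ioc a b) := by
  rintro s ⟨has, hsb⟩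
  simp only [min_eq_left has.le, min_eq_right hsb]
  rw [abs_sub_comm, abs_of_nonneg (sub_nonneg.2 has.le)]

lemma integrableOn_uIoc_abs_min_sub_min_rpow (hp : 0 < p) (a b : ℝ) :
    IntegrableOn (fun s => |min a s - min b s| ^ (p - 1)) (Ι a b) := by
  wlog hab : a ≤ b generalizing a b
  · simpa only [uIoc_comm, abs_sub_comm] using this b a (le_of_not_ge hab)
  have hrpow : IntervalIntegrable (fun s => (s - a) ^ (p - 1)) volume a b := by
    simpa using (intervalIntegral.intervalIntegrable_rpow' (a := 0) (b := b - a)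
      (by linarith : -1 < p - 1)).comp_sub_right a
  rw [uIoc_of_le hab,
    integrableOn_congr_fun (abs_min_sub_min_rpow_eqOn_Ioc a b _) measurableSet_Ioc]
  exact (intervalIntegrable_iff_integrableOn_Ioc_of_le hab).1 hrpow

lemma integral_uIoc_abs_min_sub_min_rpow (hp : 0 < p) (a b : ℝ) :
    ∫ s in Ι a b, |min a s - min b s| ^ (p - 1) = |a - b| ^ p / p := by
  wlog hab : a ≤ b generalizing a b
  · simpa only [uIoc_comm, abs_sub_comm] using this b a (le_of_not_ge hab)
  rw [uIoc_of_le hab, setIntegral_congr_fun measurableSet_Ioc (abs_min_sub_min_rpow_eqOn_Ioc a b _),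
    ← intervalIntegral.integral_of_le hab,
    intervalIntegral.integral_comp_sub_right (· ^ (p - 1)),
    sub_self, integral_rpow (Or.inl (by linarith)), sub_add_cancel, zero_rpow hp.ne', sub_zero,
    abs_sub_comm, abs_of_nonneg (sub_nonneg.2 hab)]

lemma mul_intervalIntegral_indicator_uIoc_abs_min_sub_min_rpow (hp : 0 < p) {a b : ℝ}
    (ha : a ∈ Icc (0 : ℝ) 1) (hb : b ∈ Icc (0 : ℝ) 1) :
    p * ∫ s in (0 : ℝ)..1, (Ι a b).indicator (fun s => |min a s - min b s| ^ (p - 1)) s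
      = |a - b| ^ p := by
  have hsub : Ι a b ⊆ Ioc 0 1 := Ioc_subset_Ioc (le_min ha.1 hb.1) (max_le ha.2 hb.2)
  rw [intervalIntegral.integral_of_le zero_le_one, setIntegral_indicator measurableSet_uIoc,
    inter_eq_right.2 hsub, integral_uIoc_abs_min_sub_min_rpow hp, mul_div_cancel₀ _ hp.ne']

lemma intervalIntegrable_indicator_uIoc_abs_min_sub_min_rpow (hp : 0 < p) (a b c d : ℝ) :
    IntervalIntegrable ((Ι a b).indicator (fun s => |min a s - min b s| ^ (p - 1))) volume c d :=
  ((integrableOn_uIoc_abs_min_sub_min_rpow hp a b).integrable_indicator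
    measurableSet_uIoc).intervalIntegrable

end TruncatedGap

lemma tsum_subtype_eq_sum_indicator {α M : Type*} [AddCommMonoid M] [TopologicalSpace M]
    {A : Set α} {g : α → M} {T : Finset α} (h : ∀ e ∈ A, g e ≠ 0 → e ∈ T) :
    ∑' e : A, g e = ∑ e ∈ T, A.indicator g e := by
  rw [tsum_subtype]
  exact tsum_eq_sum' fun e he => by
    rw [support_indicator] at he
    exact h e he.1 he.2

section EdgeBoundary

variable {V : Type*} (G : SimpleGraph V)

lemma mk_mem_edgeBoundary_iff {A : Set V} {u w : V} :
    s(u, w) ∈ edgeBoundary G A ↔ G.Adj u w ∧ (u ∈ A ∧ w ∉ A ∨ w ∈ A ∧ u ∉ A) := by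
  constructor
  · rintro ⟨huw, u', w', he, hu', hw'⟩
    refine ⟨G.mem_edgeSet.1 huw, ?_⟩
    rcases Sym2.eq_iff.1 he with ⟨rfl, rfl⟩ | ⟨rfl, rfl⟩
    · exact Or.inl ⟨hu', hw'⟩
    · exact Or.inr ⟨hu', hw'⟩
  · rintro ⟨huw, ⟨hu, hw⟩ | ⟨hw, hu⟩⟩
    · exact ⟨huw, u, w, rfl, hu, hw⟩
    · exact ⟨huw, w, u, Sym2.eq_swap, hw, hu⟩

lemma mk_mem_edgeBoundary_superlevelSet_iff (f : V → ℝ) {u w : V} {s : ℝ} :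
    s(u, w) ∈ edgeBoundary G {x | s ≤ f x} ↔ G.Adj u w ∧ s ∈ Ι (f u) (f w) := by
  rw [mk_mem_edgeBoundary_iff, mem_uIoc]
  simp only [mem_ofPred_eq, not_le]
  tauto

lemma indicator_edgeBoundary_superlevelSet_mk {M : Type*} [Zero M] (f : V → ℝ) {u w : V}
    (huw : G.Adj u w) (φ : ℝ → Sym2 V → M) :
    (fun s => (edgeBoundary G {x | s ≤ f x}).indicator (φ s) s(u, w))
      = (Ι (f u) (f w)).indicator (fun s => φ s s(u, w)) := by
  classical
  ext s
  simp only [indicator_apply, mk_mem_edgeBoundary_superlevelSet_iff, huw, true_and]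

lemma incidenceSet_finite_of_neighborSet_finite {v : V} (hv : (G.neighborSet v).Finite) :
    (G.incidenceSet v).Finite := by
  classical
  have := hv.to_subtype
  exact Finite.of_equiv _ (G.incidenceSetEquivNeighborSet v).symm

lemma exists_finset_edges_of_ne {M : Type*} [Zero M] (hloc : ∀ v, (G.neighborSet v).Finite)
    {f : V → M} (hf : (Function.support f).Finite) :
    ∃ T : Finset (Sym2 V), (∀ e ∈ T, e ∈ G.edgeSet) ∧
      ∀ ⦃u w : V⦄, G.Adj u w → f u ≠ f w → s(u, w) ∈ T := by
  classical
  let S := ⋃ v ∈ Function.support f, G.incidenceSet v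
  have hS : S.Finite := hf.biUnion fun v _ => incidenceSet_finite_of_neighborSet_finite G (hloc v)
  refine ⟨hS.toFinset, fun e he => ?_, fun u w huw hne => ?_⟩
  · obtain ⟨v, -, hv⟩ := mem_iUnion₂.1 (hS.mem_toFinset.1 he)
    exact hv.1
  · rw [hS.mem_toFinset, mem_iUnion₂]
    by_cases hu : f u = 0
    · exact ⟨w, fun hw => hne (hu.trans hw.symm), G.mem_edgeSet.2 huw, Sym2.mem_mk_right u w⟩
    · exact ⟨u, hu, G.mem_edgeSet.2 huw, Sym2.mem_mk_left u w⟩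

end EdgeBoundary

/-- **Modified coarea formula.** For a locally finite graph, `1 ≤ p < ∞`
and finitely supported `f : V → ℝ` with `0 ≤ f ≤ 1`,
`∑_{{u,w}∈E} |f u - f w|^p
  = p·∫₀¹ ∑_{{u,w} ∈ ∂_E{f ≥ s}} |min(f u, s) - min(f w, s)|^{p-1} ds`. -/
theorem modified_coarea {V : Type*} (G : SimpleGraph V)
    (hloc : ∀ a : V, (G.neighborSet a).Finite)
    (p : ℝ) (hp : 1 ≤ p) (f : V → ℝ) (hsupp : (Function.support f).Finite)
    (h0 : ∀ x, 0 ≤ f x) (h1 : ∀ x, f x ≤ 1) :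
    (∑' e : G.edgeSet,
        Sym2.lift ⟨fun u w => |f u - f w| ^ p,
          fun u w => by dsimp only; rw [abs_sub_comm]⟩ e.1)
      = p * ∫ s in (0:ℝ)..1,
          ∑' e : (edgeBoundary G {x : V | s ≤ f x}),
            Sym2.lift ⟨fun u w => |min (f u) s - min (f w) s| ^ (p - 1),
              fun u w => by dsimp only; rw [abs_sub_comm]⟩ e.1 := by
  have hp0 : 0 < p := by linarith
  obtain ⟨T, hTedge, hT⟩ := exists_finset_edges_of_ne G hloc hsupp
  have hf : ∀ x, f x ∈ Icc (0 : ℝ) 1 := fun x => ⟨h0 x, h1 x⟩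
  rw [tsum_subtype_eq_sum_indicator (T := T) ?edge_support,
    intervalIntegral.integral_congr fun s _ =>
      tsum_subtype_eq_sum_indicator (T := T) ?boundary_support,
    intervalIntegral.integral_finsetSum ?integrable, Finset.mul_sum]
  case edge_support =>
    refine Sym2.ind fun u w huw hne => ?_
    refine hT huw fun hfuw => hne ?_
    simp only [Sym2.lift_mk, hfuw, sub_self, abs_zero, zero_rpow hp0.ne']
  case boundary_support =>
    refine Sym2.ind fun u w huw _ => ?_
    rw [mk_mem_edgeBoundary_superlevelSet_iff] at huw
    exact hT huw.1 fun hfuw => by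
      rw [hfuw, uIoc_of_le le_rfl, Ioc_self] at huw
      exact huw.2
  case integrable =>
    refine Sym2.ind fun u w huw => ?_
    rw [indicator_edgeBoundary_superlevelSet_mk G f (G.mem_edgeSet.1 (hTedge _ huw))]
    simp only [Sym2.lift_mk]
    exact intervalIntegrable_indicator_uIoc_abs_min_sub_min_rpow hp0 _ _ _ _
  refine Finset.sum_congr rfl (Sym2.ind fun u w huw => ?_)
  rw [indicator_edgeBoundary_superlevelSet_mk G f (G.mem_edgeSet.1 (hTedge _ huw))]
  simp only [indicator_of_mem (hTedge _ huw), Sym2.lift_mk]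
  exact (mul_intervalIntegral_indicator_uIoc_abs_min_sub_min_rpow hp0 (hf u) (hf w)).symm
end

section
/- Let m ≥ 1 be an integer and let A ⊆ ℤ² be a finite set of vertices of the grid graph (ℤ²,ℓ¹). If m² < #A ≤ m² + m, then #∂_E(A) ≥ 4m + 2; and if m² + m < #A ≤ m² + 2m, then #∂_E(A) ≥ 4m + 4. -/
open Real

/-!
Every column `{x} × ℤ` meeting `A` carries at least two vertical boundary edges, one above its
topmost and one below its lowest point of `A`; likewise every row carries two horizontal ones.
Hence `#∂_E(A) ≥ 2(c + r)`, where `c` and `r` count the columns and rows meeting `A`.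
As `A` lies in the product of its projections, `#A ≤ c r`, and `(c + r)² ≥ 4 c r` turns
`m² < c r` into `c + r ≥ 2m + 1` and `m² + m < c r` into `c + r ≥ 2m + 2`.
-/

namespace GridIsoperimetry

def boundaryAlong (A : Set (ℤ × ℤ)) (v : ℤ × ℤ) : Set (ℤ × ℤ) :=
  {p | ¬(p ∈ A ↔ p + v ∈ A)}

def gridDirections : Finset (ℤ × ℤ) := {(1, 0), (-1, 0), (0, 1), (0, -1)}

theorem mk_mem_edgeBoundary {V : Type*} {G : SimpleGraph V} {A : Set V} {u w : V}
    (h : G.Adj u w) (hA : ¬(u ∈ A ↔ w ∈ A)) : s(u, w) ∈ edgeBoundary G A := by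
  refine ⟨h, ?_⟩
  by_cases hu : u ∈ A
  · exact ⟨u, w, rfl, hu, fun hw => hA (iff_of_true hu hw)⟩
  · exact ⟨w, u, Sym2.eq_swap, by tauto, hu⟩

theorem gridGraph_adj_iff {p q : ℤ × ℤ} : gridGraph.Adj p q ↔ q - p ∈ gridDirections := by
  obtain ⟨a, b⟩ := p
  obtain ⟨c, d⟩ := q
  change |a - c| + |b - d| = 1 ↔ _
  simp only [gridDirections, Finset.mem_insert, Finset.mem_singleton, Prod.mk_sub_mk,
    Prod.mk.injEq]
  rcases abs_cases (a - c) with ⟨h₁, _⟩ | ⟨h₁, _⟩ <;>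
    rcases abs_cases (b - d) with ⟨h₂, _⟩ | ⟨h₂, _⟩ <;> omega

theorem edgeBoundary_gridGraph_finite {A : Set (ℤ × ℤ)} (hA : A.Finite) :
    (edgeBoundary gridGraph A).Finite := by
  refine ((hA.prod gridDirections.finite_toSet).image fun pv => s(pv.1, pv.1 + pv.2)).subset ?_
  rintro e ⟨he, u, w, rfl, hu, -⟩
  exact ⟨(u, w - u), ⟨hu, gridGraph_adj_iff.mp he⟩, by simp⟩

theorem sym2_mk_add_injective (v : ℤ × ℤ) :
    Function.Injective fun p : ℤ × ℤ => s(p, p + v) := by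
  intro p q h
  simp only [Sym2.eq_iff, Prod.ext_iff, Prod.fst_add, Prod.snd_add] at h ⊢
  omega

theorem boundaryAlong_finite {A : Set (ℤ × ℤ)} (hA : A.Finite) (v : ℤ × ℤ) :
    (boundaryAlong A v).Finite := by
  refine (hA.union (hA.preimage (add_left_injective v).injOn)).subset fun p hp => ?_
  by_cases h : p ∈ A
  · exact Or.inl h
  · exact Or.inr (Classical.byContradiction fun hv => hp (iff_of_false h hv))

theorem ncard_boundaryAlong_add_ncard_boundaryAlong_le {A : Set (ℤ × ℤ)} (hA : A.Finite) :
    (boundaryAlong A (1, 0)).ncard + (boundaryAlong A (0, 1)).ncard ≤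
      (edgeBoundary gridGraph A).ncard := by
  have hdisj : Disjoint ((fun p => s(p, p + (1, 0))) '' boundaryAlong A (1, 0))
      ((fun p => s(p, p + (0, 1))) '' boundaryAlong A (0, 1)) := by
    refine Set.disjoint_left.mpr ?_
    rintro _ ⟨p, -, rfl⟩ ⟨q, -, h⟩
    simp only [Sym2.eq_iff, Prod.ext_iff, Prod.fst_add, Prod.snd_add] at h
    omega
  have hsub : (fun p => s(p, p + (1, 0))) '' boundaryAlong A (1, 0) ∪
      (fun p => s(p, p + (0, 1))) '' boundaryAlong A (0, 1) ⊆ edgeBoundary gridGraph A := by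
    rintro _ (⟨p, hp, rfl⟩ | ⟨p, hp, rfl⟩) <;>
      exact mk_mem_edgeBoundary (gridGraph_adj_iff.mpr (by simp [gridDirections])) hp
  calc _ = ((fun p => s(p, p + (1, 0))) '' boundaryAlong A (1, 0) ∪
        (fun p => s(p, p + (0, 1))) '' boundaryAlong A (0, 1)).ncard := by
        rw [Set.ncard_union_eq hdisj ((boundaryAlong_finite hA _).image _)
          ((boundaryAlong_finite hA _).image _), Set.ncard_image_of_injective _
          (sym2_mk_add_injective _), Set.ncard_image_of_injective _ (sym2_mk_add_injective _)]
    _ ≤ _ := Set.ncard_le_ncard hsub (edgeBoundary_gridGraph_finite hA)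

theorem exists_lt_boundary_points {S : Set ℤ} (hS : S.Finite) (hne : S.Nonempty) :
    ∃ a b, a < b ∧ a ∉ S ∧ a + 1 ∈ S ∧ b ∈ S ∧ b + 1 ∉ S := by
  refine ⟨sInf S - 1, sSup S, ?_, fun h => ?_, by simpa using Int.csInf_mem hne hS.bddBelow,
    Int.csSup_mem hne hS.bddAbove, fun h => ?_⟩
  · linarith [csInf_le_csSup hne hS.bddBelow hS.bddAbove]
  · linarith [csInf_le hS.bddBelow h]
  · linarith [le_csSup hS.bddAbove h]

theorem two_mul_ncard_image_fst_le {A : Set (ℤ × ℤ)} (hA : A.Finite) :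
    2 * (Prod.fst '' A).ncard ≤ (boundaryAlong A (0, 1)).ncard := by
  classical
  have hB := boundaryAlong_finite hA (0, 1)
  rw [Set.ncard_eq_toFinset_card _ (hA.image _), Set.ncard_eq_toFinset_card _ hB]
  refine Finset.mul_card_image_le_card_of_maps_to (f := Prod.fst) (fun p hp => ?_) 2
    fun x hx => ?_
  · simp only [Set.Finite.mem_toFinset, boundaryAlong, Set.mem_ofPred_eq] at hp ⊢
    by_cases h : p ∈ A
    · exact ⟨p, h, rfl⟩
    · exact ⟨p + (0, 1), by tauto, by simp⟩
  · obtain ⟨⟨x, y⟩, hxy, rfl⟩ := (Set.Finite.mem_toFinset _).mp hx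
    obtain ⟨a, b, hab, ha, ha', hb, hb'⟩ :=
      exists_lt_boundary_points (hA.preimage (Prod.mk_right_injective x).injOn) ⟨y, hxy⟩
    refine Finset.one_lt_card.mpr ⟨(x, a), ?_, (x, b), ?_, by simp [hab.ne]⟩ <;>
      simp_all [boundaryAlong]

theorem two_mul_ncard_image_snd_le {A : Set (ℤ × ℤ)} (hA : A.Finite) :
    2 * (Prod.snd '' A).ncard ≤ (boundaryAlong A (1, 0)).ncard := by
  have hswap :
      boundaryAlong (Prod.swap ⁻¹' A) (0, 1) = Prod.swap ⁻¹' boundaryAlong A (1, 0) := by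
    ext ⟨x, y⟩
    simp [boundaryAlong]
  have h := two_mul_ncard_image_fst_le (hA.preimage Prod.swap_injective.injOn)
  rwa [hswap, Set.ncard_preimage_of_injective_subset_range Prod.swap_injective
    (by simp [Prod.swap_surjective.range_eq]), ← Set.image_swap_eq_preimage_swap,
    Set.image_image] at h

theorem two_mul_add_le_ncard_edgeBoundary {A : Set (ℤ × ℤ)} (hA : A.Finite) :
    2 * ((Prod.fst '' A).ncard + (Prod.snd '' A).ncard) ≤ (edgeBoundary gridGraph A).ncard := by
  have hcols := two_mul_ncard_image_fst_le hA
  have hrows := two_mul_ncard_image_snd_le hA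
  have hedges := ncard_boundaryAlong_add_ncard_boundaryAlong_le hA
  omega

theorem ncard_le_ncard_image_fst_mul_ncard_image_snd {α β : Type*} {A : Set (α × β)}
    (hA : A.Finite) : A.ncard ≤ (Prod.fst '' A).ncard * (Prod.snd '' A).ncard := by
  rw [← Set.ncard_prod]
  exact Set.ncard_le_ncard Set.subset_fst_image_prod_snd_image ((hA.image _).prod (hA.image _))

theorem two_mul_add_one_le_add_of_sq_lt_mul {c r m : ℕ} (h : m ^ 2 < c * r) :
    2 * m + 1 ≤ c + r := by
  by_contra! h'
  have : (c : ℤ) + r ≤ 2 * m := by omega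
  have : (m : ℤ) ^ 2 < c * r := by exact_mod_cast h
  nlinarith [sq_nonneg ((c : ℤ) - r)]

theorem two_mul_add_two_le_add_of_sq_add_lt_mul {c r m : ℕ} (h : m ^ 2 + m < c * r) :
    2 * m + 2 ≤ c + r := by
  by_contra! h'
  have : (c : ℤ) + r ≤ 2 * m + 1 := by omega
  have : (m : ℤ) ^ 2 + m < c * r := by exact_mod_cast h
  nlinarith [sq_nonneg ((c : ℤ) - r)]

end GridIsoperimetry

theorem grid_edge_isoperimetry_refined_general (m : ℕ)
    (A : Set (ℤ × ℤ)) (hA : A.Finite) :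
    (m ^ 2 < A.ncard → A.ncard ≤ m ^ 2 + m →
      4 * m + 2 ≤ (edgeBoundary gridGraph A).ncard) ∧
    (m ^ 2 + m < A.ncard → A.ncard ≤ m ^ 2 + 2 * m →
      4 * m + 4 ≤ (edgeBoundary gridGraph A).ncard) := by
  have hedges := GridIsoperimetry.two_mul_add_le_ncard_edgeBoundary hA
  have hcard := GridIsoperimetry.ncard_le_ncard_image_fst_mul_ncard_image_snd hA
  refine ⟨fun hlow _ => ?_, fun hlow _ => ?_⟩
  · have := GridIsoperimetry.two_mul_add_one_le_add_of_sq_lt_mul (hlow.trans_le hcard)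
    omega
  · have := GridIsoperimetry.two_mul_add_two_le_add_of_sq_add_lt_mul (hlow.trans_le hcard)
    omega

/-- Let `m ≥ 1` and let `A ⊆ ℤ²` be finite. If `m² < #A ≤ m² + m`
then `#∂_E(A) ≥ 4m + 2`, and if `m² + m < #A ≤ m² + 2m` then `#∂_E(A) ≥ 4m + 4`
(edge boundary in the grid graph `(ℤ², ℓ¹)`). -/
theorem grid_edge_isoperimetry_refined (m : ℕ) (hm : 1 ≤ m)
    (A : Set (ℤ × ℤ)) (hA : A.Finite) :
    (m ^ 2 < A.ncard → A.ncard ≤ m ^ 2 + m →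
      4 * m + 2 ≤ (edgeBoundary gridGraph A).ncard) ∧
    (m ^ 2 + m < A.ncard → A.ncard ≤ m ^ 2 + 2 * m →
      4 * m + 4 ≤ (edgeBoundary gridGraph A).ncard) :=
  grid_edge_isoperimetry_refined_general m A hA
end

section
/- For every N ≥ 1, the set {v₁,…,v_N} consisting of the first N vertices of the spiral enumeration of ℤ² minimizes the edge boundary among all N-element subsets of the grid graph (ℤ²,ℓ¹): for every A ⊆ ℤ² with #A = N, one has #∂_E({v₁,…,v_N}) ≤ #∂_E(A). -/
open Real

/-!
Adding a vertex `p ∉ A` with `d` neighbours in `A` changes the edge boundary by `4 - 2d`.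
Each new spiral vertex is adjacent to its predecessor and, except at the corners `N` where
`4N` or `4N + 1` is a perfect square, also to a vertex of the previous ring. So the boundary
of the first `N` spiral vertices can grow (by `2`) only when `⌈2√N⌉` does, and stays at most
`2⌈2√N⌉`. Conversely, if `A` meets `c` columns and `r` rows, each column contributes a top and
a bottom boundary edge and each row a left and a right one, so `|∂A| ≥ 2(c + r)`, while
`4N ≤ 4cr ≤ (c + r)²`.
-/

section EdgeBoundary

variable {V : Type*} [DecidableEq V] (G : SimpleGraph V) [G.LocallyFinite]

theorem edgeBoundary_coe_finset (s : Finset V) :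
    edgeBoundary G s =
      ↑(s.biUnion fun a => (G.neighborFinset a \ s).image fun b => s(a, b)) := by
  ext e
  simp only [edgeBoundary, Set.mem_ofPred_eq, Finset.coe_biUnion, Finset.coe_image,
    Finset.coe_sdiff, Set.mem_iUnion, Set.mem_image, Set.mem_sdiff, Finset.mem_coe,
    SimpleGraph.mem_neighborFinset, exists_prop]
  constructor
  · rintro ⟨he, u, w, rfl, hu, hw⟩
    exact ⟨u, hu, w, ⟨he, hw⟩, rfl⟩
  · rintro ⟨a, ha, b, ⟨hab, hb⟩, rfl⟩
    exact ⟨hab, a, b, rfl, ha, hb⟩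

theorem ncard_edgeBoundary_eq_sum (s : Finset V) :
    (edgeBoundary G s).ncard = ∑ a ∈ s, (G.neighborFinset a \ s).card := by
  rw [edgeBoundary_coe_finset, Set.ncard_coe_finset, Finset.card_biUnion]
  · exact Finset.sum_congr rfl fun a _ =>
      Finset.card_image_of_injective _ fun _ _ => Sym2.congr_right.1
  · intro a ha a' ha' hne
    simp only [Function.onFun, Finset.disjoint_left, Finset.mem_image, Finset.mem_sdiff]
    rintro _ ⟨b, ⟨-, hb⟩, rfl⟩ ⟨b', ⟨-, hb'⟩, h⟩
    rcases Sym2.eq_iff.1 h with ⟨rfl, -⟩ | ⟨rfl, rfl⟩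
    · exact hne rfl
    · exact hb ha'

theorem ncard_edgeBoundary_insert_add (s : Finset V) {p : V} (hp : p ∉ s) :
    (edgeBoundary G ↑(insert p s)).ncard + (G.neighborFinset p ∩ s).card
      = (edgeBoundary G ↑s).ncard + (G.neighborFinset p \ s).card := by
  have hp_nbr : G.neighborFinset p \ insert p s = G.neighborFinset p \ s := by
    rw [Finset.sdiff_insert, Finset.erase_eq_of_notMem (by simp)]
  have h_nbr : ∀ a ∈ s, (G.neighborFinset a \ insert p s).card
      + (if a ∈ G.neighborFinset p then 1 else 0) = (G.neighborFinset a \ s).card := by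
    intro a _
    rw [Finset.sdiff_insert]
    split_ifs with ha <;> rw [SimpleGraph.mem_neighborFinset] at ha
    · exact Finset.card_erase_add_one (by simpa [hp] using ha.symm)
    · rw [Finset.erase_eq_of_notMem (by simp [G.adj_comm, ha]), add_zero]
  rw [ncard_edgeBoundary_eq_sum, ncard_edgeBoundary_eq_sum, Finset.sum_insert hp, hp_nbr,
    ← Finset.sum_congr rfl h_nbr, Finset.sum_add_distrib, Finset.sum_boole, Nat.cast_id,
    Finset.filter_mem_eq_inter, Finset.inter_comm]
  ring

end EdgeBoundary

/-- Every fibre of `f` met by `s` contains a point of `s` that `τ` moves out of `s`: the point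
of the fibre maximising `h`. -/
theorem card_image_le_card_filter_notMem {β γ ι : Type*} [DecidableEq β] [DecidableEq γ]
    [LinearOrder ι] (s : Finset β) (f : β → γ) (h : β → ι) (τ : β → β)
    (hf : ∀ p, f (τ p) = f p) (hh : ∀ p, h p < h (τ p)) :
    (s.image f).card ≤ (s.filter fun p => τ p ∉ s).card := by
  refine (Finset.card_le_card fun x hx => ?_).trans (Finset.card_image_le (f := f))
  obtain ⟨a, ha, rfl⟩ := Finset.mem_image.1 hx
  obtain ⟨p, hp, hmax⟩ := (s.filter (f · = f a)).exists_max_image h ⟨a, by simp [ha]⟩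
  rw [Finset.mem_filter] at hp
  refine Finset.mem_image.2 ⟨p, Finset.mem_filter.2 ⟨hp.1, fun hτ => ?_⟩, hp.2⟩
  exact (hh p).not_ge (hmax _ (Finset.mem_filter.2 ⟨hτ, (hf p).trans hp.2⟩))

def gridDirections : Finset (ℤ × ℤ) := {(1, 0), (-1, 0), (0, 1), (0, -1)}

theorem gridGraph_adj_iff_s15 {p q : ℤ × ℤ} : gridGraph.Adj p q ↔ q - p ∈ gridDirections := by
  show |p.1 - q.1| + |p.2 - q.2| = 1 ↔ _
  rw [Int.abs_eq_natAbs, Int.abs_eq_natAbs]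
  simp only [gridDirections, Finset.mem_insert, Finset.mem_singleton, Prod.ext_iff,
    Prod.fst_sub, Prod.snd_sub]
  omega

instance : gridGraph.LocallyFinite := fun p =>
  Fintype.ofFinset (gridDirections.image (p + ·)) fun q => by
    simp [gridGraph_adj_iff_s15, neg_add_eq_sub]

theorem gridGraph_neighborFinset (p : ℤ × ℤ) :
    gridGraph.neighborFinset p = gridDirections.image (p + ·) := by
  ext q
  simp [gridGraph_adj_iff_s15, neg_add_eq_sub]

theorem card_gridGraph_neighborFinset (p : ℤ × ℤ) : (gridGraph.neighborFinset p).card = 4 := by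
  rw [gridGraph_neighborFinset, Finset.card_image_of_injective _ (add_right_injective p)]
  rfl

theorem ncard_edgeBoundary_gridGraph_insert_add_two_mul {s : Finset (ℤ × ℤ)} {p : ℤ × ℤ}
    (hp : p ∉ s) :
    (edgeBoundary gridGraph ↑(insert p s)).ncard + 2 * (gridGraph.neighborFinset p ∩ s).card
      = (edgeBoundary gridGraph ↑s).ncard + 4 := by
  have := ncard_edgeBoundary_insert_add gridGraph s hp
  have := Finset.card_inter_add_card_sdiff (gridGraph.neighborFinset p) s
  rw [card_gridGraph_neighborFinset] at this
  omega

theorem two_mul_card_image_add_le_ncard_edgeBoundary_gridGraph (s : Finset (ℤ × ℤ)) :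
    2 * ((s.image Prod.fst).card + (s.image Prod.snd).card)
      ≤ (edgeBoundary gridGraph ↑s).ncard := by
  have h_nbr : ∀ a ∈ s, (gridGraph.neighborFinset a \ s).card
      = (gridDirections.bipartiteAbove (fun a e => a + e ∉ s) a).card := by
    intro a _
    rw [gridGraph_neighborFinset, ← Finset.filter_notMem_eq_sdiff, Finset.filter_image,
      Finset.card_image_of_injective _ (add_right_injective a)]
    rfl
  rw [ncard_edgeBoundary_eq_sum, Finset.sum_congr rfl h_nbr,
    Finset.sum_card_bipartiteAbove_eq_sum_card_bipartiteBelow, gridDirections,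
    Finset.sum_insert (by decide), Finset.sum_insert (by decide), Finset.sum_insert (by decide),
    Finset.sum_singleton]
  have hr := card_image_le_card_filter_notMem s Prod.snd Prod.fst (· + (1, 0))
    (fun _ => by simp) (fun _ => by simp)
  have hl := card_image_le_card_filter_notMem s Prod.snd (- ·.1) (· + (-1, 0))
    (fun _ => by simp) (fun _ => by simp)
  have hu := card_image_le_card_filter_notMem s Prod.fst Prod.snd (· + (0, 1))
    (fun _ => by simp) (fun _ => by simp)
  have hd := card_image_le_card_filter_notMem s Prod.fst (- ·.2) (· + (0, -1))
    (fun _ => by simp) (fun _ => by simp)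
  simp only [Finset.bipartiteBelow]
  omega

theorem spiral_succ (n : ℕ) : spiral (n + 1) = spiralNext (spiral n) :=
  Function.iterate_succ_apply' spiralNext n (0, 0)

theorem gridGraph_adj_spiralNext (p : ℤ × ℤ) : gridGraph.Adj p (spiralNext p) := by
  rw [gridGraph_adj_iff_s15, spiralNext]
  split_ifs <;> simp [gridDirections, Prod.ext_iff]

/-- Walks the ring `max |x| |y| = k + 1` counterclockwise from `(k + 1, -k)`, turning after
`t = 2k + 1, 4k + 3, 6k + 5`. -/
def ringPoint (k t : ℕ) : ℤ × ℤ :=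
  if t ≤ 2 * k + 1 then (k + 1, t - k)
  else if t ≤ 4 * k + 3 then (3 * k + 2 - t, k + 1)
  else if t ≤ 6 * k + 5 then (-k - 1, 5 * k + 4 - t)
  else (t - 7 * k - 6, -k - 1)

theorem spiralNext_ringPoint {k t : ℕ} (ht : t + 1 < 8 * k + 8) :
    spiralNext (ringPoint k t) = ringPoint k (t + 1) := by
  simp only [ringPoint, spiralNext]
  split_ifs <;> dsimp only at * <;>
    simp only [Prod.mk.injEq, Nat.cast_add, Nat.cast_one, true_and, and_true] <;> omega

theorem spiralNext_ringPoint_last (k : ℕ) :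
    spiralNext (ringPoint k (8 * k + 7)) = ringPoint (k + 1) 0 := by
  simp only [ringPoint, spiralNext]
  split_ifs <;> dsimp only at * <;>
    simp only [Prod.mk.injEq, Nat.cast_add, Nat.cast_one, true_and, and_true] <;> omega

theorem spiral_sq_add_of_spiral_sq {k : ℕ} (h0 : spiral ((2 * k + 1) ^ 2) = ringPoint k 0) :
    ∀ t < 8 * k + 8, spiral ((2 * k + 1) ^ 2 + t) = ringPoint k t
  | 0, _ => h0
  | t + 1, ht => by
    rw [← add_assoc, spiral_succ, spiral_sq_add_of_spiral_sq h0 t (by omega),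
      spiralNext_ringPoint ht]

theorem spiral_sq (k : ℕ) : spiral ((2 * k + 1) ^ 2) = ringPoint k 0 := by
  induction k with
  | zero => rfl
  | succ k ih =>
    rw [show (2 * (k + 1) + 1) ^ 2 = (2 * k + 1) ^ 2 + (8 * k + 7) + 1 by ring, spiral_succ,
      spiral_sq_add_of_spiral_sq ih _ (by omega), spiralNext_ringPoint_last]

theorem spiral_sq_add {k t : ℕ} (ht : t < 8 * k + 8) :
    spiral ((2 * k + 1) ^ 2 + t) = ringPoint k t :=
  spiral_sq_add_of_spiral_sq (spiral_sq k) t ht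

theorem exists_eq_sq_add {N : ℕ} (hN : 1 ≤ N) :
    ∃ k t, N = (2 * k + 1) ^ 2 + t ∧ t < 8 * k + 8 := by
  induction N, hN using Nat.le_induction with
  | base => exact ⟨0, 0, rfl, by omega⟩
  | succ N _ ih =>
    obtain ⟨k, t, rfl, ht⟩ := ih
    by_cases h : t + 1 < 8 * k + 8
    · exact ⟨k, t + 1, by omega, h⟩
    · exact ⟨k + 1, 0, by ring_nf; omega, by omega⟩

/-- The inner neighbour of a non-corner point `t + 1` of ring `k + 1` is the point `t - j` of
ring `k`, where `j / 2` is the number of corners already turned. -/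
theorem exists_ringPoint_adj_ringPoint_succ {k t : ℕ} (ht : t < 8 * k + 14)
    (hc : t ≠ 2 * k + 2 ∧ t ≠ 4 * k + 6 ∧ t ≠ 6 * k + 10) :
    ∃ t' < 8 * k + 8, ringPoint k t' ≠ ringPoint (k + 1) t ∧
      gridGraph.Adj (ringPoint (k + 1) (t + 1)) (ringPoint k t') := by
  obtain ⟨t', j, rfl, hj⟩ : ∃ t' j, t = t' + j ∧
      (j = 0 ∧ t' ≤ 2 * k + 1 ∨ j = 2 ∧ 2 * k + 1 ≤ t' ∧ t' ≤ 4 * k + 3 ∨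
        j = 4 ∧ 4 * k + 3 ≤ t' ∧ t' ≤ 6 * k + 5 ∨ j = 6 ∧ 6 * k + 5 ≤ t') := by
    rcases (by omega : t ≤ 2 * k + 1 ∨ 2 * k + 3 ≤ t ∧ t ≤ 4 * k + 5 ∨
      4 * k + 7 ≤ t ∧ t ≤ 6 * k + 9 ∨ 6 * k + 11 ≤ t) with h | h | h | h
    · exact ⟨t, 0, rfl, by omega⟩
    · exact ⟨t - 2, 2, by omega, by omega⟩
    · exact ⟨t - 4, 4, by omega, by omega⟩
    · exact ⟨t - 6, 6, by omega, by omega⟩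
  refine ⟨t', by omega, ?_⟩
  rcases hj with ⟨rfl, hj⟩ | ⟨rfl, hj⟩ | ⟨rfl, hj⟩ | ⟨rfl, hj⟩ <;>
  · simp (disch := omega) only [ringPoint, if_pos, if_neg]
    try split_ifs
    all_goals
      simp only [gridGraph_adj_iff_s15, gridDirections, ne_eq, Prod.ext_iff, Finset.mem_insert,
        Finset.mem_singleton, Prod.fst_sub, Prod.snd_sub]
      push_cast
      omega

theorem exists_adj_spiral_of_not_isSquare {N : ℕ} (hN : 1 ≤ N)
    (hsq : ¬ (IsSquare (4 * N) ∨ IsSquare (4 * N + 1))) :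
    ∃ i < N, spiral i ≠ spiral (N - 1) ∧ gridGraph.Adj (spiral N) (spiral i) := by
  obtain ⟨k, t, rfl, ht⟩ := exists_eq_sq_add hN
  have hcorner : t ≠ 0 ∧ t ≠ 2 * k + 1 ∧ t ≠ 4 * k + 3 ∧ t ≠ 6 * k + 5 := by
    refine ⟨?_, ?_, ?_, ?_⟩ <;> rintro rfl <;> apply hsq
    exacts [Or.inl ⟨4 * k + 2, by ring⟩, Or.inr ⟨4 * k + 3, by ring⟩,
      Or.inl ⟨4 * k + 4, by ring⟩, Or.inr ⟨4 * k + 5, by ring⟩]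
  obtain ⟨t, rfl⟩ : ∃ s, t = s + 1 := ⟨t - 1, by omega⟩
  rw [show (2 * k + 1) ^ 2 + (t + 1) - 1 = (2 * k + 1) ^ 2 + t by omega, spiral_sq_add ht,
    spiral_sq_add (by omega : t < 8 * k + 8)]
  by_cases hlast : t + 1 = 8 * k + 7
  -- the last point of a ring also touches the first one
  · refine ⟨(2 * k + 1) ^ 2, by omega, ?_⟩
    rw [spiral_sq]
    simp (disch := omega) only [ringPoint, if_pos, if_neg, gridGraph_adj_iff_s15, gridDirections,
      ne_eq, Prod.ext_iff, Finset.mem_insert, Finset.mem_singleton, Prod.fst_sub, Prod.snd_sub]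
    push_cast
    omega
  rcases k with _ | k
  · refine ⟨0, by omega, ?_⟩
    rw [gridGraph_adj_iff_s15]
    obtain rfl | rfl | rfl : t = 1 ∨ t = 3 ∨ t = 5 := by omega
    all_goals decide
  · obtain ⟨t', ht', hne, hadj⟩ :=
      exists_ringPoint_adj_ringPoint_succ (k := k) (t := t) (by omega) (by omega)
    refine ⟨(2 * k + 1) ^ 2 + t', ?_, by rwa [spiral_sq_add ht'], by rwa [spiral_sq_add ht']⟩
    nlinarith

theorem four_mul_le_sub_one_mul_sub_one {N m : ℕ}
    (hsq : IsSquare (4 * N) ∨ IsSquare (4 * N + 1)) (hm : 4 * (N + 1) ≤ m * m) :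
    4 * N ≤ (m - 1) * (m - 1) := by
  obtain ⟨s, hs⟩ : ∃ s, 4 * N ≤ s * s ∧ s * s ≤ 4 * N + 1 := by
    rcases hsq with ⟨s, hs⟩ | ⟨s, hs⟩ <;> exact ⟨s, by omega, by omega⟩
  have : s < m := Nat.mul_self_lt_mul_self_iff.1 (by omega)
  exact hs.1.trans (Nat.mul_self_le_mul_self (by omega))

theorem ncard_edgeBoundary_spiral_le : ∀ {N m : ℕ}, 4 * N ≤ m * m →
    (edgeBoundary gridGraph ↑((Finset.range N).image spiral)).ncard ≤ 2 * m
  | 0, m, _ => by simp [edgeBoundary]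
  | N + 1, m, hm => by
    rw [Finset.range_add_one, Finset.image_insert]
    set S := (Finset.range N).image spiral
    -- the spiral is injective, but this case is harmless anyway
    by_cases hp : spiral N ∈ S
    · rw [Finset.insert_eq_of_mem hp]
      exact ncard_edgeBoundary_spiral_le (by omega)
    have hstep := ncard_edgeBoundary_gridGraph_insert_add_two_mul hp
    set d := (gridGraph.neighborFinset (spiral N) ∩ S).card
    rcases Nat.eq_zero_or_pos N with rfl | hN
    · have h0 : (edgeBoundary gridGraph ↑S).ncard = 0 := by simp [S, edgeBoundary]
      nlinarith
    have hnbr : ∀ i < N, gridGraph.Adj (spiral N) (spiral i) →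
        spiral i ∈ gridGraph.neighborFinset (spiral N) ∩ S := fun i hi hadj =>
      Finset.mem_inter.2 ⟨(gridGraph.mem_neighborFinset _ _).2 hadj,
        Finset.mem_image_of_mem _ (Finset.mem_range.2 hi)⟩
    have hprev := hnbr (N - 1) (by omega) (by
      rw [show N = N - 1 + 1 by omega, spiral_succ]
      exact (gridGraph_adj_spiralNext _).symm)
    by_cases hsq : IsSquare (4 * N) ∨ IsSquare (4 * N + 1)
    · have : 1 ≤ d := Finset.card_pos.2 ⟨_, hprev⟩
      have : (edgeBoundary gridGraph ↑S).ncard ≤ 2 * (m - 1) :=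
        ncard_edgeBoundary_spiral_le (four_mul_le_sub_one_mul_sub_one hsq hm)
      have : m ≠ 0 := by rintro rfl; omega
      omega
    · obtain ⟨i, hi, hne, hadj⟩ := exists_adj_spiral_of_not_isSquare hN hsq
      have : 2 ≤ d := by
        rw [← Finset.card_pair hne]
        exact Finset.card_le_card (Finset.insert_subset (hnbr i hi hadj)
          (Finset.singleton_subset_iff.2 hprev))
      have : (edgeBoundary gridGraph ↑S).ncard ≤ 2 * m :=
        ncard_edgeBoundary_spiral_le (by omega)
      omega

theorem spiral_minimizes_edge_boundary_general (N : ℕ)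
    (A : Set (ℤ × ℤ)) (hA : A.Finite) (hcard : A.ncard = N) :
    (edgeBoundary gridGraph (spiral '' Set.Iio N)).ncard
      ≤ (edgeBoundary gridGraph A).ncard := by
  lift A to Finset (ℤ × ℤ) using hA
  rw [Set.ncard_coe_finset] at hcard
  have hcover : N ≤ (A.image Prod.fst).card * (A.image Prod.snd).card :=
    hcard ▸ (Finset.card_le_card Finset.subset_product).trans_eq (Finset.card_product _ _)
  have hspiral : spiral '' Set.Iio N = ↑((Finset.range N).image spiral) := by simp
  calc (edgeBoundary gridGraph (spiral '' Set.Iio N)).ncard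
      ≤ 2 * ((A.image Prod.fst).card + (A.image Prod.snd).card) := by
        rw [hspiral]
        refine ncard_edgeBoundary_spiral_le ?_
        nlinarith [four_mul_le_sq_add (A.image Prod.fst).card (A.image Prod.snd).card]
    _ ≤ (edgeBoundary gridGraph A).ncard :=
        two_mul_card_image_add_le_ncard_edgeBoundary_gridGraph A

/-- For every `N ≥ 1`, the first `N` vertices of the spiral
enumeration minimize the edge boundary among all `N`-element subsets of the grid
graph `(ℤ², ℓ¹)`. -/
theorem spiral_minimizes_edge_boundary (N : ℕ) (hN : 1 ≤ N)
    (A : Set (ℤ × ℤ)) (hA : A.Finite) (hcard : A.ncard = N) :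
    (edgeBoundary gridGraph (spiral '' Set.Iio N)).ncard
      ≤ (edgeBoundary gridGraph A).ncard :=
  spiral_minimizes_edge_boundary_general N A hA hcard
end

section
/- Let A be a finite nonempty subset of the vertex set ℕ×{0,1} of the ladder graph. Then the edge boundary satisfies #∂_E(A) ≥ 2; moreover, if #A ≥ 3 and #A is odd, then #∂_E(A) ≥ 3. -/
open Real

/-- The ladder graph on `ℕ × {0,1}`: `(m,i)` adjacent to `(n,j)` iff `|m-n|+|i-j| = 1`. -/
def ladderGraph : SimpleGraph (ℕ × Fin 2) where
  Adj a b := |(a.1 : ℤ) - b.1| + |(a.2.1 : ℤ) - b.2.1| = 1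
  symm := by
    constructor
    intro a b h
    rw [abs_sub_comm (b.1 : ℤ) (a.1 : ℤ), abs_sub_comm (b.2.1 : ℤ) (a.2.1 : ℤ)]
    exact h
  loopless := by constructor; intro a h; simp at h

/-!
Call the rows `ℕ × {i}` the rails and the edges `{(m,0),(m,1)}` the rungs of the ladder.
The rightmost vertex of `A` on a rail always cuts the rail edge to its right. If `A` meets both
rails this gives two boundary edges; if `#A` is moreover odd, some column contains exactly one
vertex of `A` (a union of full columns has even size), so a rung is cut as well. If `A` lies on a
single rail, every rung at a vertex of `A` is cut, so `#∂_E(A) ≥ #A + 1`.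
-/

namespace SimpleGraph

variable {V : Type*} {G : SimpleGraph V}

lemma edgeBoundary_subset_biUnion_incidenceSet (A : Set V) :
    edgeBoundary G A ⊆ ⋃ v ∈ A, G.incidenceSet v := by
  rintro _ ⟨hadj, u, w, rfl, hu, -⟩
  exact Set.mem_biUnion hu (G.mk'_mem_incidenceSet_left_iff.2 hadj)

lemma edgeBoundary_finite (hG : ∀ v, (G.neighborSet v).Finite) {A : Set V} (hA : A.Finite) :
    (edgeBoundary G A).Finite := by
  classical
  refine (hA.biUnion fun v _ => ?_).subset (edgeBoundary_subset_biUnion_incidenceSet A)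
  have := (hG v).to_subtype
  exact Set.finite_coe_iff.1 (Finite.of_equiv _ (G.incidenceSetEquivNeighborSet v).symm)

end SimpleGraph

section LadderGraph

lemma ladderGraph_adj_rung (m : ℕ) {i j : Fin 2} (hij : i ≠ j) :
    ladderGraph.Adj (m, i) (m, j) := by
  change |(m : ℤ) - m| + |(i.1 : ℤ) - j.1| = 1
  fin_cases i <;> fin_cases j <;> simp_all

lemma ladderGraph_adj_rail (m : ℕ) (i : Fin 2) : ladderGraph.Adj (m, i) (m + 1, i) := by
  change |(m : ℤ) - (m + 1 : ℕ)| + |(i.1 : ℤ) - i.1| = 1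
  simp

lemma ladderGraph_neighborSet_finite (v : ℕ × Fin 2) : (ladderGraph.neighborSet v).Finite := by
  refine ((Set.finite_Iic (v.1 + 1)).prod Set.finite_univ).subset
    fun w (hw : ladderGraph.Adj v w) => ?_
  have hw : |(v.1 : ℤ) - w.1| + |(v.2.1 : ℤ) - w.2.1| = 1 := hw
  have hcol : |(v.1 : ℤ) - w.1| ≤ 1 := by linarith [abs_nonneg ((v.2.1 : ℤ) - w.2.1)]
  simp only [Set.mem_prod, Set.mem_Iic, Set.mem_univ, and_true]
  rw [abs_le] at hcol
  omega

def rungEdge (m : ℕ) : Sym2 (ℕ × Fin 2) := s((m, 0), (m, 1))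

def railEdge (i : Fin 2) (m : ℕ) : Sym2 (ℕ × Fin 2) := s((m, i), (m + 1, i))

lemma rungEdge_injective : Function.Injective rungEdge := by
  intro m n h
  simpa [rungEdge] using h

lemma railEdge_ne_rungEdge (i : Fin 2) (m n : ℕ) : railEdge i m ≠ rungEdge n := by
  simp only [railEdge, rungEdge, ne_eq, Sym2.eq_iff, Prod.mk.injEq]
  omega

lemma railEdge_ne_railEdge {i j : Fin 2} (hij : i ≠ j) (m n : ℕ) :
    railEdge i m ≠ railEdge j n := by
  simp [railEdge, hij]

variable {A : Set (ℕ × Fin 2)}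

lemma rungEdge_mem_edgeBoundary {m : ℕ} {i j : Fin 2} (hi : (m, i) ∈ A) (hj : (m, j) ∉ A) :
    rungEdge m ∈ edgeBoundary ladderGraph A := by
  have hij : i ≠ j := by rintro rfl; exact hj hi
  refine ⟨?_, (m, i), (m, j), ?_, hi, hj⟩
  · exact ladderGraph_adj_rung m (i := 0) (j := 1) (by decide)
  · fin_cases i <;> fin_cases j <;> simp_all [rungEdge, Sym2.eq_swap]

lemma exists_railEdge_mem_edgeBoundary (hA : A.Finite) {p : ℕ × Fin 2} (hp : p ∈ A) :
    ∃ m, railEdge p.2 m ∈ edgeBoundary ladderGraph A := by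
  obtain ⟨q, ⟨hqA, hq⟩, hmax⟩ :=
    Set.exists_max_image {q ∈ A | q.2 = p.2} Prod.fst (hA.subset fun _ h => h.1) ⟨p, hp, rfl⟩
  refine ⟨q.1, ladderGraph_adj_rail q.1 p.2, (q.1, p.2), (q.1 + 1, p.2), rfl, ?_, fun h => ?_⟩
  · rwa [← hq]
  · have := hmax _ ⟨h, rfl⟩
    omega

lemma edgeBoundary_ladderGraph_finite (hA : A.Finite) : (edgeBoundary ladderGraph A).Finite :=
  SimpleGraph.edgeBoundary_finite ladderGraph_neighborSet_finite hA

lemma even_ncard_of_forall_mem_iff (h : ∀ m, (m, (0 : Fin 2)) ∈ A ↔ (m, (1 : Fin 2)) ∈ A) :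
    Even A.ncard := by
  have hA : A = (Prod.fst '' A) ×ˢ Set.univ := by
    ext ⟨m, i⟩
    fin_cases i <;> simp [h]
  rw [hA, Set.ncard_prod, Set.ncard_univ, Nat.card_eq_fintype_card, Fintype.card_fin]
  exact even_two.mul_left _

lemma exists_rungEdge_mem_edgeBoundary_of_odd (hodd : Odd A.ncard) :
    ∃ m, rungEdge m ∈ edgeBoundary ladderGraph A := by
  by_contra! h
  refine Nat.not_even_iff_odd.2 hodd
    (even_ncard_of_forall_mem_iff fun m => ⟨fun h0 => ?_, fun h1 => ?_⟩)
  · by_contra h1; exact h m (rungEdge_mem_edgeBoundary h0 h1)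
  · by_contra h0; exact h m (rungEdge_mem_edgeBoundary h1 h0)

/-- Every vertex of a set lying on one rail has its rung cut, and its last vertex also cuts a
rail edge. -/
lemma ncard_lt_ncard_edgeBoundary_of_subset_rail (hA : A.Finite) (hne : A.Nonempty) {i : Fin 2}
    (hrail : ∀ p ∈ A, p.2 = i) : A.ncard < (edgeBoundary ladderGraph A).ncard := by
  obtain ⟨p, hp⟩ := hne
  obtain ⟨m, hm⟩ := exists_railEdge_mem_edgeBoundary hA hp
  have hrungs : (fun q : ℕ × Fin 2 => rungEdge q.1) '' A ⊆ edgeBoundary ladderGraph A := by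
    rintro _ ⟨q, hq, rfl⟩
    refine rungEdge_mem_edgeBoundary (i := i) (j := i.rev) (by rwa [← hrail q hq]) fun h => ?_
    exact (by decide : ∀ i : Fin 2, i.rev ≠ i) i (hrail _ h)
  have hinj : Set.InjOn (fun q : ℕ × Fin 2 => rungEdge q.1) A := fun q hq r hr h =>
    Prod.ext (rungEdge_injective h) ((hrail q hq).trans (hrail r hr).symm)
  have hnotMem : railEdge p.2 m ∉ (fun q : ℕ × Fin 2 => rungEdge q.1) '' A := by
    rintro ⟨q, -, h⟩
    exact railEdge_ne_rungEdge _ _ _ h.symm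
  calc A.ncard < (insert (railEdge p.2 m) ((fun q : ℕ × Fin 2 => rungEdge q.1) '' A)).ncard := by
        rw [Set.ncard_insert_of_notMem hnotMem (hA.image _), hinj.ncard_image]
        omega
    _ ≤ _ := Set.ncard_le_ncard (Set.insert_subset hm hrungs) (edgeBoundary_ladderGraph_finite hA)

end LadderGraph

/-- Every finite nonempty subset `A` of the ladder graph satisfies
`#∂_E(A) ≥ 2`; moreover, if `#A ≥ 3` is odd then `#∂_E(A) ≥ 3`. -/
theorem ladder_edge_boundary (A : Set (ℕ × Fin 2)) (hA : A.Finite) (hne : A.Nonempty) :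
    2 ≤ (edgeBoundary ladderGraph A).ncard ∧
      (3 ≤ A.ncard → Odd A.ncard → 3 ≤ (edgeBoundary ladderGraph A).ncard) := by
  have hfin := edgeBoundary_ladderGraph_finite hA
  by_cases hrail : ∃ i, ∀ p ∈ A, p.2 = i
  · obtain ⟨i, hi⟩ := hrail
    have := ncard_lt_ncard_edgeBoundary_of_subset_rail hA hne hi
    have := (Set.ncard_pos hA).2 hne
    exact ⟨by omega, fun _ _ => by omega⟩
  obtain ⟨p, hp⟩ := hne
  obtain ⟨q, hq, hqp⟩ : ∃ q ∈ A, q.2 ≠ p.2 := by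
    simpa only [not_forall, exists_prop] using not_exists.1 hrail p.2
  obtain ⟨m, hm⟩ := exists_railEdge_mem_edgeBoundary hA hp
  obtain ⟨n, hn⟩ := exists_railEdge_mem_edgeBoundary hA hq
  have hrails : ({railEdge p.2 m, railEdge q.2 n} : Set _).ncard = 2 :=
    Set.ncard_pair (railEdge_ne_railEdge hqp.symm m n)
  refine ⟨hrails.ge.trans <| Set.ncard_le_ncard (Set.pair_subset hm hn) hfin, fun _ hodd => ?_⟩
  obtain ⟨k, hk⟩ := exists_rungEdge_mem_edgeBoundary_of_odd hodd
  calc 3 = (insert (rungEdge k) ({railEdge p.2 m, railEdge q.2 n} : Set _)).ncard := by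
        rw [Set.ncard_insert_of_notMem, hrails]
        simp [(railEdge_ne_rungEdge _ _ _).symm]
    _ ≤ _ := Set.ncard_le_ncard (Set.insert_subset hk (Set.pair_subset hm hn)) hfin
end

section
/- Let f : ℤ → ℝ_{≥0} be finitely supported and let f* denote its rearrangement with respect to the alternating enumeration of ℤ given by v₁=0, v₂=−1, v₃=1, v₄=−2, v₅=2, … (i.e. v_{2k} = −k and v_{2k+1} = k for k ≥ 1). Then for every real p with 1 ≤ p < ∞, and also for p = ∞, one has ‖∇f*‖_{L^p} ≤ ‖∇f‖_{L^p}, where the norms are taken with respect to the path graph on ℤ (x adjacent to y iff |x−y| = 1). -/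
open Real

/-- The path graph on `ℤ`: `x` adjacent to `y` iff `|x - y| = 1`. -/
def pathGraph : SimpleGraph ℤ where
  Adj x y := |x - y| = 1
  symm := by constructor; intro x y h; rw [abs_sub_comm]; exact h
  loopless := by constructor; intro x h; simp at h

/-- The alternating enumeration of `ℤ`, 0-indexed:
`v₁ = 0, v₂ = -1, v₃ = 1, v₄ = -2, v₅ = 2, …` -/
def altEnum (n : ℕ) : ℤ :=
  if n % 2 = 1 then -(((n : ℤ) + 1) / 2) else (n : ℤ) / 2

/-!
Write the values of `f` in decreasing order as `A 0 ≥ A 1 ≥ ⋯ ≥ 0`, so that `f = A ∘ e⁻¹` for a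
bijection `e : ℕ → ℤ`, while `f* = A ∘ altIndex`. The gradient of `f*` takes the values
`A 0 - A 1` and `A k - A (k + 2)`.

For each `k` let `a` and `b` be the leftmost and rightmost points of `{e 0, …, e k}`: the edges
`(a - 1, a)` and `(b, b + 1)` descend from height `≥ A k` to height `≤ A (k + 1)`, and one of
them even to `≤ A (k + 2)` since `a - 1 ≠ b + 1`; this gives `p = ∞`. For finite `p`, charge the
edge descending from height `u` with `(u - A (k + 1)) ^ p - (u - A k) ^ p`. The charges on one
edge telescope to at most its `|∇f| ^ p`, and no edge is charged both as a left and as a right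
end. By convexity the charge increases with `u`, so it is least when the two ends have heights
`A (k - 1)` and `A k`, as they do for `f*`; these least charges add up to `‖∇f*‖ₚᵖ`.
-/

open Finset

theorem ConvexOn.increment_le_increment {𝕜 : Type*} [Field 𝕜] [LinearOrder 𝕜]
    [IsStrictOrderedRing 𝕜] {s : Set 𝕜} {φ : 𝕜 → 𝕜} (hφ : ConvexOn 𝕜 s φ) {x y d : 𝕜}
    (hx : x ∈ s) (hyd : y + d ∈ s) (hxy : x ≤ y) (hd : 0 ≤ d) :
    φ (x + d) - φ x ≤ φ (y + d) - φ y := by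
  rcases hd.eq_or_lt with rfl | hd
  · simp
  rcases hxy.eq_or_lt with rfl | hxy
  · rfl
  have hxd : x + d ∈ s := hφ.1.ordConnected.out hx hyd ⟨by linarith, by linarith⟩
  have hy : y ∈ s := hφ.1.ordConnected.out hx hyd ⟨hxy.le, by linarith⟩
  -- both increments are compared with the slope of the chord from `x` to `y + d`
  have h₁ := hφ.secant_mono hx hxd hyd (by linarith) (by linarith) (by linarith)
  have h₂ := hφ.secant_mono hyd hx hy (by linarith) (by linarith) hxy.le
  rw [add_sub_cancel_left] at h₁
  rw [← neg_div_neg_eq, neg_sub, neg_sub, ← neg_div_neg_eq (φ y - _), neg_sub, neg_sub,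
    add_sub_cancel_left] at h₂
  exact (div_le_div_iff_of_pos_right hd).1 (h₁.trans h₂)

section LevelCost

variable {A : ℕ → ℝ} {p u v : ℝ} {k n : ℕ}

noncomputable def levelCost (A : ℕ → ℝ) (p u : ℝ) (k : ℕ) : ℝ :=
  (u - A (k + 1)) ^ p - (u - A k) ^ p

lemma levelCost_nonneg (hA : Antitone A) (hp : 0 ≤ p) (hu : A k ≤ u) :
    0 ≤ levelCost A p u k :=
  sub_nonneg.2 <| rpow_le_rpow (sub_nonneg.2 hu) (by linarith [hA k.le_succ]) hp

lemma levelCost_mono (hA : Antitone A) (hp : 1 ≤ p) (hu : A k ≤ u) (huv : u ≤ v) :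
    levelCost A p u k ≤ levelCost A p v k := by
  have h := (convexOn_rpow hp).increment_le_increment (x := u - A k) (y := v - A k)
    (d := A k - A (k + 1)) (sub_nonneg.2 hu) (by simp only [Set.mem_Ici]; linarith [hA k.le_succ])
    (by linarith) (by linarith [hA k.le_succ])
  simp only [levelCost, sub_add_sub_cancel] at h ⊢
  exact h

lemma levelCost_add_levelCost_succ (A : ℕ → ℝ) (p u : ℝ) (k : ℕ) :
    levelCost A p u k + levelCost A p u (k + 1) = (u - A (k + 2)) ^ p - (u - A k) ^ p := by
  simp only [levelCost]
  ring

lemma sum_levelCost_le (hA : Antitone A) (hp : 0 ≤ p) {J : Finset ℕ} {w : ℝ}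
    (hJ : ∀ k ∈ J, A k ≤ u ∧ w ≤ A (k + 1)) : ∑ k ∈ J, levelCost A p u k ≤ |u - w| ^ p := by
  rcases J.eq_empty_or_nonempty with rfl | hne
  · simpa using rpow_nonneg (abs_nonneg _) p
  set a := J.min' hne
  set b := J.max' hne
  have ha := (hJ a (J.min'_mem hne)).1
  have hb := (hJ b (J.max'_mem hne)).2
  have hab : a ≤ b := J.min'_le b (J.max'_mem hne)
  have hAab : A (b + 1) ≤ A a := hA (by omega)
  calc ∑ k ∈ J, levelCost A p u k
      ≤ ∑ k ∈ Ico a (b + 1), levelCost A p u k :=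
        sum_le_sum_of_subset_of_nonneg
          (fun k hk => mem_Ico.2 ⟨J.min'_le k hk, Nat.lt_succ_of_le (J.le_max' k hk)⟩)
          (fun k hk _ => levelCost_nonneg hA hp ((hA (mem_Ico.1 hk).1).trans ha))
    _ = (u - A (b + 1)) ^ p - (u - A a) ^ p := sum_Ico_sub (fun k => (u - A k) ^ p) (by omega)
    _ ≤ (u - A (b + 1)) ^ p := sub_le_self _ (rpow_nonneg (sub_nonneg.2 ha) p)
    _ ≤ |u - w| ^ p :=
        rpow_le_rpow (by linarith) ((sub_le_sub_left hb u).trans (le_abs_self _)) hp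

-- At level `0` the truncated `k - 1` is `0`: both ends of `{e 0}` are `e 0`, of height `A 0`.
lemma sum_levelCost_eq (hp : p ≠ 0) (hn : A n = 0) (hn' : A (n + 1) = 0) :
    ∑ k ∈ range n, (levelCost A p (A (k - 1)) k + levelCost A p (A k) k) =
      (A 0 - A 1) ^ p + ∑ k ∈ range n, (A k - A (k + 2)) ^ p := by
  have htop : levelCost A p (A (n - 1)) n = 0 := by simp [levelCost, hn, hn']
  have hbot : levelCost A p (A (0 - 1)) 0 = (A 0 - A 1) ^ p := by
    simp [levelCost, zero_rpow hp]
  rw [sum_add_distrib, ← add_zero (∑ k ∈ range n, _), ← htop, ← sum_range_succ, sum_range_succ',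
    hbot, add_comm _ ((A 0 - A 1) ^ p), add_assoc, ← sum_add_distrib]
  congr 1
  refine sum_congr rfl fun k _ => ?_
  rw [Nat.add_sub_cancel, add_comm, levelCost_add_levelCost_succ, sub_self, zero_rpow hp, sub_zero]

lemma levelCost_pred_add_le (hA : Antitone A) (hp : 1 ≤ p) {i j : ℕ} (hi : i ≤ k) (hj : j ≤ k)
    (hij : min i j ≤ k - 1) :
    levelCost A p (A (k - 1)) k + levelCost A p (A k) k ≤
      levelCost A p (A i) k + levelCost A p (A j) k := by
  wlog h : i ≤ j generalizing i j
  · rw [add_comm (levelCost A p (A i) k)]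
    exact this hj hi (min_comm i j ▸ hij) (by omega)
  have hAk : A k ≤ A (k - 1) := hA (Nat.sub_le k 1)
  exact add_le_add (levelCost_mono hA hp hAk (hA (by omega)))
    (levelCost_mono hA hp le_rfl (hA hj))

end LevelCost

lemma pathGraph_adj_add_one (y : ℤ) : pathGraph.Adj y (y + 1) := by
  simp [pathGraph]

noncomputable def pathEdgeEquiv : ℤ ≃ pathGraph.edgeSet :=
  Equiv.ofBijective (fun y => ⟨s(y, y + 1), pathGraph_adj_add_one y⟩) <| by
    refine ⟨fun a b h => ?_, fun ⟨e, he⟩ => ?_⟩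
    · have := Sym2.eq_iff.1 (congrArg Subtype.val h)
      omega
    · induction e with
      | h u w =>
        rcases abs_eq (zero_le_one' ℤ) |>.1 (he : |u - w| = 1) with h | h
        · exact ⟨w, Subtype.ext <| Sym2.eq_iff.2 (by omega)⟩
        · exact ⟨u, Subtype.ext <| Sym2.eq_iff.2 (by omega)⟩

lemma gradLp_pathGraph (g : ℤ → ℝ) (p : ℝ) :
    gradLp pathGraph g p = (∑' y : ℤ, |g y - g (y + 1)| ^ p) ^ (1 / p) := by
  rw [gradLp, ← pathEdgeEquiv.tsum_eq]
  rfl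

lemma gradLinf_pathGraph (g : ℤ → ℝ) :
    gradLinf pathGraph g = ⨆ y : ℤ, |g y - g (y + 1)| := by
  rw [gradLinf, ← pathEdgeEquiv.iSup_comp]
  rfl

lemma summable_abs_sub_rpow {g : ℤ → ℝ} (hg : (Function.support g).Finite) {p : ℝ}
    (hp : p ≠ 0) :
    Summable fun y => |g y - g (y + 1)| ^ p := by
  refine summable_of_hasFiniteSupport <|
    (hg.union (hg.preimage (add_left_injective 1).injOn)).subset fun y hy => ?_
  by_contra h
  simp only [Set.mem_union, Function.mem_support, Set.mem_preimage, not_or, not_not] at h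
  simp [h.1, h.2, zero_rpow hp] at hy

def altIndex : ℤ → ℕ
  | .ofNat n => 2 * n
  | .negSucc n => 2 * n + 1

lemma natCast_altIndex (z : ℤ) : (altIndex z : ℤ) = if 0 ≤ z then 2 * z else -2 * z - 1 := by
  cases z with
  | ofNat n => simp [altIndex]
  | negSucc n => simp [altIndex, Int.negSucc_eq]; omega

def altEquiv : ℕ ≃ ℤ where
  toFun := altEnum
  invFun := altIndex
  left_inv m := by
    apply Nat.cast_injective (R := ℤ)
    rw [natCast_altIndex]
    unfold altEnum
    split_ifs <;> omega
  right_inv z := by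
    have := natCast_altIndex z
    unfold altEnum
    split_ifs <;> omega

section AltIndex

variable {A : ℕ → ℝ} {p : ℝ} {n : ℕ}

lemma natCast_altIndex_of_nonneg {y : ℤ} (hy : 0 ≤ y) : (altIndex y : ℤ) = 2 * y := by
  rw [natCast_altIndex, if_pos hy]

lemma natCast_altIndex_of_neg {y : ℤ} (hy : y < 0) : (altIndex y : ℤ) = -2 * y - 1 := by
  rw [natCast_altIndex, if_neg hy.not_ge]

lemma abs_sub_altIndex_of_nonneg (hA : Antitone A) {y : ℤ} (hy : 0 ≤ y) :
    |A (altIndex y) - A (altIndex (y + 1))| = A (altIndex y) - A (altIndex y + 2) := by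
  have h₀ := natCast_altIndex_of_nonneg hy
  have h₁ := natCast_altIndex_of_nonneg (by omega : 0 ≤ y + 1)
  rw [show altIndex (y + 1) = altIndex y + 2 by omega,
    abs_of_nonneg (sub_nonneg.2 (hA (by omega)))]

lemma abs_sub_altIndex_of_le_neg_two (hA : Antitone A) {y : ℤ} (hy : y ≤ -2) :
    |A (altIndex y) - A (altIndex (y + 1))| =
      A (altIndex (y + 1)) - A (altIndex (y + 1) + 2) := by
  have h₀ := natCast_altIndex_of_neg (by omega : y < 0)
  have h₁ := natCast_altIndex_of_neg (by omega : y + 1 < 0)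
  rw [show altIndex y = altIndex (y + 1) + 2 by omega, abs_sub_comm,
    abs_of_nonneg (sub_nonneg.2 (hA (by omega)))]

lemma abs_sub_altIndex_neg_one (hA : Antitone A) :
    |A (altIndex (-1)) - A (altIndex (-1 + 1))| = A 0 - A 1 := by
  rw [abs_sub_comm]
  exact abs_of_nonneg (sub_nonneg.2 (hA zero_le_one))

lemma exists_abs_sub_altIndex_le (hA : Antitone A) (y : ℤ) :
    ∃ k, |A (altIndex y) - A (altIndex (y + 1))| ≤ A k - A (k + 2) := by
  rcases le_or_gt 0 y with hy | hy
  · exact ⟨_, (abs_sub_altIndex_of_nonneg hA hy).le⟩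
  obtain rfl | hy := (Int.le_sub_one_of_lt hy).eq_or_lt
  · exact ⟨0, (abs_sub_altIndex_neg_one hA).trans_le (by linarith [hA (by omega : 1 ≤ 2)])⟩
  · exact ⟨_, (abs_sub_altIndex_of_le_neg_two hA (by omega)).le⟩

lemma tsum_abs_sub_altIndex (hA : Antitone A) (hp : p ≠ 0) (hn : ∀ i, n ≤ i → A i = 0) :
    ∑' y : ℤ, |A (altIndex y) - A (altIndex (y + 1))| ^ p =
      (A 0 - A 1) ^ p + ∑ k ∈ range n, (A k - A (k + 2)) ^ p := by
  set D : ℕ → ℝ := fun k => (A k - A (k + 2)) ^ p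
  have hD : ∀ k ∉ range n, D k = 0 := fun k hk => by
    simp only [mem_range, not_lt] at hk
    simp [D, hn k hk, hn (k + 2) (by omega), zero_rpow hp]
  have hDs : Summable D := summable_of_ne_finset_zero hD
  have hnat : ∀ k : ℕ, |A (altIndex k) - A (altIndex (k + 1))| ^ p = D (2 * k) := fun k => by
    rw [abs_sub_altIndex_of_nonneg hA k.cast_nonneg]
    rfl
  have hneg : ∀ k : ℕ,
      |A (altIndex (-((k + 1 : ℕ) + 1))) - A (altIndex (-((k + 1 : ℕ) + 1) + 1))| ^ p =
        D (2 * k + 1) := fun k => by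
    rw [abs_sub_altIndex_of_le_neg_two hA (by omega)]
    have := natCast_altIndex_of_neg (by omega : -(((k + 1 : ℕ) : ℤ) + 1) + 1 < 0)
    rw [show altIndex (-(((k + 1 : ℕ) : ℤ) + 1) + 1) = 2 * k + 1 by omega]
  have hevens : Summable fun k => D (2 * k) :=
    hDs.comp_injective (mul_right_injective₀ two_ne_zero)
  have hodds : Summable fun k => D (2 * k + 1) :=
    hDs.comp_injective ((add_left_injective 1).comp (mul_right_injective₀ two_ne_zero))
  have hnegs :
      Summable fun k : ℕ => |A (altIndex (-(k + 1))) - A (altIndex (-(k + 1) + 1))| ^ p :=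
    (summable_nat_add_iff 1).1 (hodds.congr fun k => (hneg k).symm)
  have hnats : Summable fun k : ℕ => |A (altIndex k) - A (altIndex (k + 1))| ^ p :=
    hevens.congr fun k => (hnat k).symm
  rw [tsum_of_nat_of_neg_add_one (f := fun y : ℤ => |A (altIndex y) - A (altIndex (y + 1))| ^ p)
    hnats hnegs, hnegs.tsum_eq_zero_add]
  simp only [hnat, hneg, Nat.cast_zero, zero_add, abs_sub_altIndex_neg_one hA]
  have hDsum : ∑' k, D k = ∑ k ∈ range n, D k := tsum_eq_sum hD
  rw [← hDsum, ← tsum_even_add_odd hevens hodds]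
  ring

end AltIndex

section Enumeration

variable (e : ℕ ≃ ℤ) (k : ℕ)

def leftEnd : ℤ := ((range (k + 1)).map e.toEmbedding).min' (by simp)

def rightEnd : ℤ := ((range (k + 1)).map e.toEmbedding).max' (by simp)

lemma symm_leftEnd_le : e.symm (leftEnd e k) ≤ k := by
  have := min'_mem ((range (k + 1)).map e.toEmbedding) (by simp)
  rw [mem_map_equiv, mem_range] at this
  exact Nat.le_of_lt_succ this

lemma symm_rightEnd_le : e.symm (rightEnd e k) ≤ k := by
  have := max'_mem ((range (k + 1)).map e.toEmbedding) (by simp)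
  rw [mem_map_equiv, mem_range] at this
  exact Nat.le_of_lt_succ this

lemma lt_symm_leftEnd_sub_one : k < e.symm (leftEnd e k - 1) := by
  by_contra h
  have := min'_le ((range (k + 1)).map e.toEmbedding) (leftEnd e k - 1)
    (by rw [mem_map_equiv, mem_range]; omega)
  exact (sub_one_lt (leftEnd e k)).not_ge this

lemma lt_symm_rightEnd_add_one : k < e.symm (rightEnd e k + 1) := by
  by_contra h
  have := le_max' ((range (k + 1)).map e.toEmbedding) (rightEnd e k + 1)
    (by rw [mem_map_equiv, mem_range]; omega)
  exact (lt_add_one (rightEnd e k)).not_ge this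

lemma leftEnd_le_rightEnd : leftEnd e k ≤ rightEnd e k := min'_le_max' _ _

lemma min_symm_leftEnd_symm_rightEnd_le :
    min (e.symm (leftEnd e k)) (e.symm (rightEnd e k)) ≤ k - 1 := by
  have hl := symm_leftEnd_le e k
  have hr := symm_rightEnd_le e k
  rcases k.eq_zero_or_pos with rfl | hk
  · omega
  have hlr : leftEnd e k < rightEnd e k := min'_lt_max'_of_card _ (by simp; omega)
  have := e.symm.injective.ne hlr.ne
  omega

lemma leftEnd_sub_one_ne_rightEnd (k' : ℕ) : leftEnd e k - 1 ≠ rightEnd e k' := by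
  intro h
  have h₁ := lt_symm_leftEnd_sub_one e k
  have h₂ := symm_leftEnd_le e k
  have h₃ := symm_rightEnd_le e k'
  have h₄ := lt_symm_rightEnd_add_one e k'
  rw [h] at h₁
  rw [show leftEnd e k = rightEnd e k' + 1 by omega] at h₂
  omega

variable {A : ℕ → ℝ} {p : ℝ} {n : ℕ}

lemma sum_leftEnd_levelCost_le (hA : Antitone A) (hp : 0 ≤ p) (s : Finset ℕ) (y : ℤ) :
    ∑ k ∈ s with leftEnd e k - 1 = y, levelCost A p (A (e.symm (leftEnd e k))) k ≤
      |A (e.symm y) - A (e.symm (y + 1))| ^ p := by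
  have hy : ∀ k ∈ s.filter (fun k => leftEnd e k - 1 = y), leftEnd e k = y + 1 :=
    fun k hk => by rw [← (mem_filter.1 hk).2, sub_add_cancel]
  rw [abs_sub_comm, sum_congr rfl fun k hk => by rw [hy k hk]]
  refine sum_levelCost_le hA hp fun k hk => ⟨hA ?_, hA ?_⟩
  · exact hy k hk ▸ symm_leftEnd_le e k
  · exact (mem_filter.1 hk).2 ▸ lt_symm_leftEnd_sub_one e k

lemma sum_rightEnd_levelCost_le (hA : Antitone A) (hp : 0 ≤ p) (s : Finset ℕ) (y : ℤ) :
    ∑ k ∈ s with rightEnd e k = y, levelCost A p (A (e.symm (rightEnd e k))) k ≤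
      |A (e.symm y) - A (e.symm (y + 1))| ^ p := by
  rw [sum_congr rfl fun k hk => by rw [(mem_filter.1 hk).2]]
  refine sum_levelCost_le hA hp fun k hk => ⟨hA ?_, hA ?_⟩
  · exact (mem_filter.1 hk).2 ▸ symm_rightEnd_le e k
  · exact (mem_filter.1 hk).2 ▸ lt_symm_rightEnd_add_one e k

lemma sum_levelCost_ends_le (hA : Antitone A) (hp : 0 ≤ p) (s : Finset ℕ) (y : ℤ) :
    ∑ k ∈ s with leftEnd e k - 1 = y, levelCost A p (A (e.symm (leftEnd e k))) k +
      ∑ k ∈ s with rightEnd e k = y, levelCost A p (A (e.symm (rightEnd e k))) k ≤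
      |A (e.symm y) - A (e.symm (y + 1))| ^ p := by
  rcases (s.filter fun k => rightEnd e k = y).eq_empty_or_nonempty with h | ⟨k', hk'⟩
  · rw [h, sum_empty, add_zero]
    exact sum_leftEnd_levelCost_le e hA hp s y
  · have h : s.filter (fun k => leftEnd e k - 1 = y) = ∅ := filter_eq_empty_iff.2 fun k _ hk =>
      leftEnd_sub_one_ne_rightEnd e k k' (hk.trans (mem_filter.1 hk').2.symm)
    rw [h, sum_empty, zero_add]
    exact sum_rightEnd_levelCost_le e hA hp s y

lemma support_comp_symm_subset (hn : ∀ i, n ≤ i → A i = 0) :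
    (Function.support fun y => A (e.symm y)) ⊆ (range n).map e.toEmbedding := fun y hy => by
  rw [mem_coe, mem_map_equiv, mem_range]
  by_contra h
  exact hy (hn _ (not_lt.1 h))

theorem sum_levelCost_le_tsum (hA : Antitone A) (hp : 1 ≤ p) (hn : ∀ i, n ≤ i → A i = 0) :
    ∑ k ∈ range n, (levelCost A p (A (k - 1)) k + levelCost A p (A k) k) ≤
      ∑' y : ℤ, |A (e.symm y) - A (e.symm (y + 1))| ^ p := by
  set S := (range n).image (fun k => leftEnd e k - 1) ∪ (range n).image (rightEnd e)
  have hsum : Summable fun y => |A (e.symm y) - A (e.symm (y + 1))| ^ p :=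
    summable_abs_sub_rpow ((finite_toSet _).subset (support_comp_symm_subset e hn)) (by linarith)
  calc ∑ k ∈ range n, (levelCost A p (A (k - 1)) k + levelCost A p (A k) k)
      ≤ ∑ k ∈ range n, (levelCost A p (A (e.symm (leftEnd e k))) k +
          levelCost A p (A (e.symm (rightEnd e k))) k) :=
        sum_le_sum fun k _ => levelCost_pred_add_le hA hp (symm_leftEnd_le e k)
          (symm_rightEnd_le e k) (min_symm_leftEnd_symm_rightEnd_le e k)
    _ = ∑ y ∈ S, (∑ k ∈ range n with leftEnd e k - 1 = y,
          levelCost A p (A (e.symm (leftEnd e k))) k +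
          ∑ k ∈ range n with rightEnd e k = y, levelCost A p (A (e.symm (rightEnd e k))) k) := by
        rw [sum_add_distrib, sum_add_distrib,
          sum_fiberwise_of_maps_to fun k hk => mem_union_left _ (mem_image_of_mem _ hk),
          sum_fiberwise_of_maps_to fun k hk => mem_union_right _ (mem_image_of_mem _ hk)]
    _ ≤ ∑ y ∈ S, |A (e.symm y) - A (e.symm (y + 1))| ^ p :=
        sum_le_sum fun y _ => sum_levelCost_ends_le e hA (by linarith) _ y
    _ ≤ ∑' y : ℤ, |A (e.symm y) - A (e.symm (y + 1))| ^ p :=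
        hsum.sum_le_tsum S fun _ _ => by positivity

lemma exists_sub_le_abs_sub (hA : Antitone A) (k : ℕ) :
    ∃ y, A k - A (k + 2) ≤ |A (e.symm y) - A (e.symm (y + 1))| := by
  have h₁ := lt_symm_leftEnd_sub_one e k
  have h₂ := lt_symm_rightEnd_add_one e k
  have hne := e.symm.injective.ne (by linarith [leftEnd_le_rightEnd e k] :
    leftEnd e k - 1 ≠ rightEnd e k + 1)
  rcases (by omega : k + 2 ≤ e.symm (leftEnd e k - 1) ∨ k + 2 ≤ e.symm (rightEnd e k + 1))
    with h | h
  · refine ⟨leftEnd e k - 1, ?_⟩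
    rw [sub_add_cancel, abs_sub_comm]
    exact (sub_le_sub (hA (symm_leftEnd_le e k)) (hA h)).trans (le_abs_self _)
  · exact ⟨rightEnd e k, (sub_le_sub (hA (symm_rightEnd_le e k)) (hA h)).trans (le_abs_self _)⟩

lemma bddAbove_range_abs_sub (hA : Antitone A) (hn : ∀ i, n ≤ i → A i = 0) :
    BddAbove (Set.range fun y => |A (e.symm y) - A (e.symm (y + 1))|) := by
  have hA₀ : ∀ i, 0 ≤ A i := fun i => (hn (i + n) (by omega)).symm.le.trans (hA (by omega))
  refine ⟨A 0, Set.forall_mem_range.2 fun y => abs_sub_le_iff.2 ⟨?_, ?_⟩⟩ <;>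
    linarith [hA (Nat.zero_le (e.symm y)), hA (Nat.zero_le (e.symm (y + 1))), hA₀ (e.symm y),
      hA₀ (e.symm (y + 1))]

theorem gradLp_comp_altIndex_le (hA : Antitone A) (hn : ∀ i, n ≤ i → A i = 0) (hp : 1 ≤ p) :
    gradLp pathGraph (fun y => A (altIndex y)) p ≤
      gradLp pathGraph (fun y => A (e.symm y)) p := by
  rw [gradLp_pathGraph, gradLp_pathGraph]
  refine rpow_le_rpow (tsum_nonneg fun _ => by positivity) ?_ (by positivity)
  rw [tsum_abs_sub_altIndex hA (by linarith) hn,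
    ← sum_levelCost_eq (by linarith) (hn n le_rfl) (hn (n + 1) n.le_succ)]
  exact sum_levelCost_le_tsum e hA hp hn

theorem gradLinf_comp_altIndex_le (hA : Antitone A) (hn : ∀ i, n ≤ i → A i = 0) :
    gradLinf pathGraph (fun y => A (altIndex y)) ≤
      gradLinf pathGraph (fun y => A (e.symm y)) := by
  rw [gradLinf_pathGraph, gradLinf_pathGraph]
  refine ciSup_le fun y => ?_
  obtain ⟨k, hk⟩ := exists_abs_sub_altIndex_le hA y
  obtain ⟨y', hy'⟩ := exists_sub_le_abs_sub e hA k
  exact hk.trans (hy'.trans (le_ciSup (bddAbove_range_abs_sub e hA hn) y'))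

end Enumeration

theorem line_polya_szego_general (f fstar : ℤ → ℝ)
    (hsupp : (Function.support f).Finite)
    (hre : IsRearrangement altEnum f fstar) :
    (∀ p : ℝ, 1 ≤ p → gradLp pathGraph fstar p ≤ gradLp pathGraph f p) ∧
      gradLinf pathGraph fstar ≤ gradLinf pathGraph f := by
  obtain ⟨⟨σ, rfl⟩, hmono⟩ := hre
  set e := altEquiv.trans σ
  set A : ℕ → ℝ := fun i => f (e i)
  have hA : Antitone A := fun i j hij => hmono i j hij
  obtain ⟨N, hN⟩ := (hsupp.preimage e.injective.injOn).bddAbove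
  have hn : ∀ i, N + 1 ≤ i → A i = 0 := fun i hi => not_not.1 fun h => absurd (hN h) (by omega)
  have hf : f = fun y => A (e.symm y) := funext fun y => congrArg f (e.apply_symm_apply y).symm
  have hfσ : f ∘ σ = fun y => A (altIndex y) :=
    funext fun y => congrArg (f ∘ σ) (altEquiv.apply_symm_apply y).symm
  rw [hfσ, hf]
  exact ⟨fun p hp => gradLp_comp_altIndex_le e hA hn hp, gradLinf_comp_altIndex_le e hA hn⟩

/-- On the path graph on `ℤ`, the rearrangement of a finitely
supported `f : ℤ → ℝ_{≥0}` along the alternating enumeration satisfies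
`‖∇f*‖_{L^p} ≤ ‖∇f‖_{L^p}` for all `1 ≤ p < ∞` and for `p = ∞`. -/
theorem line_polya_szego (f fstar : ℤ → ℝ)
    (hsupp : (Function.support f).Finite) (hpos : ∀ x, 0 ≤ f x)
    (hre : IsRearrangement altEnum f fstar) :
    (∀ p : ℝ, 1 ≤ p → gradLp pathGraph fstar p ≤ gradLp pathGraph f p) ∧
      gradLinf pathGraph fstar ≤ gradLinf pathGraph f :=
  line_polya_szego_general f fstar hsupp hre
end
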